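/- arXiv:1801.04882 — 3 statements merged into one kernel-verified Lean document; each statement's English description precedes it below -/
import Mathlib

section
/- Let S ∈ X_M^L, let t, ε be integers with t ≥ 1 and ε ≥ 1, and let Y ⊆ S be a subset whose distinct elements have pairwise Hamming distance at least 2ε+1 (i.e., Y is an ε-substitution-correcting code). Set B = Σ_{i=1}^{ε} binom(L, i). Then the Hamming error ball with no sequence losses satisfies: |B^H_{0,t,ε}(S)| ≥ B^{|Y|} if |Y| ≤ t, and |B^H_{0,t,ε}(S)| ≥ binom(|Y|, t) · B^{t} if |Y| > t. -/
/-- The Hamming error ball `B^H_{s,t,ε}(S)`. -/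
def hamBall (L s t ε : ℕ) (S : Finset (Fin L → Bool)) :
    Set (Finset (Fin L → Bool)) :=
  { S' | ∃ (U Lo F : Finset (Fin L → Bool)) (f : (Fin L → Bool) → (Fin L → Bool)),
      Disjoint U Lo ∧ Disjoint U F ∧ Disjoint Lo F ∧
      U ∪ Lo ∪ F = S ∧ Lo.card ≤ s ∧ F.card ≤ t ∧
      (∀ x ∈ F, hammingDist x (f x) ≤ ε) ∧
      S' = U ∪ F.image f }

namespace Stmt16

abbrev Pt (L : ℕ) := Fin L → Bool

variable {L : ℕ}

/-- punctured Hamming ball -/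
def pB (ε : ℕ) (x : Pt L) : Finset (Pt L) :=
  Finset.univ.filter fun p => p ≠ x ∧ hammingDist x p ≤ ε

lemma sphere_card (x : Pt L) (i : ℕ) :
    (Finset.univ.filter fun p : Pt L => hammingDist x p = i).card = L.choose i := by
  have h : (Finset.powersetCard i (Finset.univ : Finset (Fin L))).card = L.choose i := by
    simp [Finset.card_powersetCard]
  rw [← h]
  apply Finset.card_bij' (i := fun p _ => Finset.univ.filter fun j => x j ≠ p j)
    (j := fun T _ => fun j => if j ∈ T then !(x j) else x j)
  · intro p hp
    simp only [Finset.mem_filter, Finset.mem_univ, true_and] at hp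
    simp only [Finset.mem_powersetCard]
    exact ⟨Finset.filter_subset _ _ |>.trans (by simp), by rw [← hp]; rfl⟩
  · intro T hT
    simp only [Finset.mem_powersetCard] at hT
    simp only [Finset.mem_filter, Finset.mem_univ, true_and]
    have : (Finset.univ.filter fun j => x j ≠ (if j ∈ T then !(x j) else x j)) = T := by
      ext j
      by_cases hj : j ∈ T <;> simp [hj]
    rw [show hammingDist x (fun j => if j ∈ T then !(x j) else x j)
        = (Finset.univ.filter fun j => x j ≠ (if j ∈ T then !(x j) else x j)).card from rfl,
      this, hT.2]
  · intro p hp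
    funext j
    by_cases hj : x j ≠ p j <;> simp [hj] <;>
      (cases hx : x j <;> cases hpj : p j <;> simp_all)
  · intro T hT
    ext j
    by_cases hj : j ∈ T <;> simp [hj]

lemma pB_card (ε : ℕ) (x : Pt L) :
    (pB ε x).card = ∑ i ∈ Finset.Icc 1 ε, L.choose i := by
  have h : pB ε x
      = (Finset.Icc 1 ε).biUnion fun i => Finset.univ.filter fun p => hammingDist x p = i := by
    ext p
    simp only [pB, Finset.mem_filter, Finset.mem_univ, true_and, Finset.mem_biUnion,
      Finset.mem_Icc]
    constructor
    · rintro ⟨hne, hle⟩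
      refine ⟨hammingDist x p, ⟨?_, hle⟩, rfl⟩
      rcases Nat.eq_zero_or_pos (hammingDist x p) with h0 | h0
      · exact absurd (hammingDist_eq_zero.mp h0).symm hne
      · exact h0
    · rintro ⟨i, ⟨h1, h2⟩, rfl⟩
      refine ⟨fun hpx => ?_, h2⟩
      subst hpx
      simp [hammingDist_self] at h1
  rw [h, Finset.card_biUnion]
  · exact Finset.sum_congr rfl fun i _ => sphere_card x i
  · intro i _ j _ hij
    simp only [Finset.disjoint_left, Finset.mem_filter, Finset.mem_univ, true_and]
    rintro p rfl h
    exact hij h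

section Main

variable (S T : Finset (Pt L)) (g : Pt L → Pt L)

def mkC : Finset (Pt L) := (T.filter fun x => g x ∈ S).image g
def mkA : Finset (Pt L) := T.filter fun x => g x ∉ S
def mkS : Finset (Pt L) := (S \ (mkC S T g ∪ mkA S T g)) ∪ (mkA S T g).image g

variable {S T g}
variable {Y : Finset (Pt L)} {ε : ℕ}

lemma ball_disj (hcode : ∀ x ∈ Y, ∀ y ∈ Y, x ≠ y → 2 * ε + 1 ≤ hammingDist x y)
    {x y p : Pt L} (hx : x ∈ Y) (hy : y ∈ Y)
    (h1 : hammingDist x p ≤ ε) (h2 : hammingDist y p ≤ ε) : x = y := by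
  by_contra hne
  have h3 := hcode x hx y hy hne
  have h4 := hammingDist_triangle x p y
  rw [hammingDist_comm p y] at h4
  omega

lemma gx_notMem (hcode : ∀ x ∈ Y, ∀ y ∈ Y, x ≠ y → 2 * ε + 1 ≤ hammingDist x y)
    (hTY : T ⊆ Y) (hg : ∀ x ∈ T, g x ≠ x ∧ hammingDist x (g x) ≤ ε)
    {x : Pt L} (hx : x ∈ T) : g x ∉ Y := fun hmem =>
  (hg x hx).1 (ball_disj hcode hmem (hTY hx)
    (by simp [hammingDist_self]) (hg x hx).2)

lemma g_injOn (hcode : ∀ x ∈ Y, ∀ y ∈ Y, x ≠ y → 2 * ε + 1 ≤ hammingDist x y)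
    (hTY : T ⊆ Y) (hg : ∀ x ∈ T, g x ≠ x ∧ hammingDist x (g x) ≤ ε)
    {x y : Pt L} (hx : x ∈ T) (hy : y ∈ T) (hxy : g x = g y) : x = y :=
  ball_disj hcode (hTY hx) (hTY hy) (hg x hx).2 (hxy ▸ (hg y hy).2)

lemma mem_mkS {p : Pt L} : p ∈ mkS S T g ↔
    ((p ∈ S ∧ p ∉ mkC S T g ∧ p ∉ mkA S T g) ∨ ∃ x ∈ T, g x ∉ S ∧ g x = p) := by
  simp only [mkS, Finset.mem_union, Finset.mem_sdiff, Finset.mem_image, mkA,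
    Finset.mem_filter, not_or]
  constructor
  · rintro (⟨h1, h2, h3⟩ | ⟨y, ⟨hy1, hy2⟩, rfl⟩)
    · exact Or.inl ⟨h1, h2, by simpa [mkA] using h3⟩
    · exact Or.inr ⟨y, hy1, hy2, rfl⟩
  · rintro (⟨h1, h2, h3⟩ | ⟨y, hy1, hy2, rfl⟩)
    · exact Or.inl ⟨h1, h2, by simpa [mkA] using h3⟩
    · exact Or.inr ⟨y, ⟨hy1, hy2⟩, rfl⟩

lemma mkS_char (hcode : ∀ x ∈ Y, ∀ y ∈ Y, x ≠ y → 2 * ε + 1 ≤ hammingDist x y)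
    (hTY : T ⊆ Y) (hg : ∀ x ∈ T, g x ≠ x ∧ hammingDist x (g x) ≤ ε)
    {x p : Pt L} (hx : x ∈ Y) (hpx : p ≠ x) (hpd : hammingDist x p ≤ ε) :
    ((p ∈ S ↔ p ∉ mkS S T g) ↔ (x ∈ T ∧ p = g x)) := by
  constructor
  · intro hiff
    by_cases hpS : p ∈ S
    · have hns : p ∉ mkS S T g := hiff.mp hpS
      rw [mem_mkS] at hns
      push_neg at hns
      obtain ⟨h1, _⟩ := hns
      have hCA : p ∈ mkC S T g ∨ p ∈ mkA S T g := by
        by_contra hcon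
        push_neg at hcon
        exact hcon.2 (h1 hpS hcon.1)
      rcases hCA with hC | hA
      · simp only [mkC, Finset.mem_image, Finset.mem_filter] at hC
        obtain ⟨y, ⟨hyT, _⟩, hyp⟩ := hC
        have hxy : x = y := ball_disj hcode hx (hTY hyT) hpd (hyp ▸ (hg y hyT).2)
        exact ⟨hxy ▸ hyT, (hxy ▸ hyp).symm⟩
      · simp only [mkA, Finset.mem_filter] at hA
        have hpY : p ∈ Y := hTY hA.1
        exact absurd (ball_disj hcode hx hpY hpd (by simp [hammingDist_self])).symm hpx
    · have hs : p ∈ mkS S T g := by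
        by_contra hcon
        exact hpS (hiff.mpr hcon)
      rw [mem_mkS] at hs
      rcases hs with ⟨h1, _⟩ | ⟨y, hyT, _, hyp⟩
      · exact absurd h1 hpS
      · have hxy : x = y := ball_disj hcode hx (hTY hyT) hpd (hyp ▸ (hg y hyT).2)
        exact ⟨hxy ▸ hyT, (hxy ▸ hyp).symm⟩
  · rintro ⟨hxT, rfl⟩
    by_cases hgS : g x ∈ S
    · have hne : g x ∉ mkS S T g := by
        rw [mem_mkS]
        rintro (⟨_, h2, _⟩ | ⟨y, hyT, hyS, hyg⟩)
        · exact h2 (by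
            simp only [mkC, Finset.mem_image, Finset.mem_filter]
            exact ⟨x, ⟨hxT, hgS⟩, rfl⟩)
        · exact hyS (g_injOn hcode hTY hg hyT hxT hyg ▸ hgS)
      simp [hgS, hne]
    · have hin : g x ∈ mkS S T g := mem_mkS.mpr (Or.inr ⟨x, hxT, hgS, rfl⟩)
      simp [hgS, hin]

lemma mkS_mem_ball (t : ℕ) (hcode : ∀ x ∈ Y, ∀ y ∈ Y, x ≠ y → 2 * ε + 1 ≤ hammingDist x y)
    (hYS : Y ⊆ S) (hTY : T ⊆ Y) (hTt : T.card ≤ t)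
    (hg : ∀ x ∈ T, g x ≠ x ∧ hammingDist x (g x) ≤ ε) :
    mkS S T g ∈ hamBall L 0 t ε S := by
  classical
  set F : Finset (Pt L) := mkC S T g ∪ mkA S T g with hF
  set f : Pt L → Pt L := fun p => if h : ∃ y, y ∈ T ∧ g y = p then h.choose else g p with hf
  have hCS : mkC S T g ⊆ S := by
    intro p hp
    simp only [mkC, Finset.mem_image, Finset.mem_filter] at hp
    obtain ⟨y, ⟨_, hy2⟩, rfl⟩ := hp
    exact hy2
  have hAS : mkA S T g ⊆ S := (Finset.filter_subset _ _).trans (hTY.trans hYS)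
  have hFS : F ⊆ S := Finset.union_subset hCS hAS
  have hfA : ∀ p ∈ mkA S T g, f p = g p := by
    intro p hp
    simp only [mkA, Finset.mem_filter] at hp
    have hne : ¬ ∃ y, y ∈ T ∧ g y = p := by
      rintro ⟨y, hy, rfl⟩
      exact gx_notMem hcode hTY hg hy (hTY hp.1)
    simp [hf, hne]
  have hfC : ∀ p ∈ mkC S T g, f p ∈ T ∧ g (f p) = p := by
    intro p hp
    simp only [mkC, Finset.mem_image, Finset.mem_filter] at hp
    obtain ⟨y, ⟨hy1, _⟩, hy3⟩ := hp
    have hex : ∃ y, y ∈ T ∧ g y = p := ⟨y, hy1, hy3⟩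
    simp only [hf, dif_pos hex]
    exact hex.choose_spec
  refine ⟨S \ F, ∅, F, f, ?_, ?_, ?_, ?_, ?_, ?_, ?_, ?_⟩
  · exact Finset.disjoint_empty_right _
  · exact Finset.sdiff_disjoint
  · exact Finset.disjoint_empty_left _
  · rw [Finset.union_empty, Finset.sdiff_union_of_subset hFS]
  · simp
  · have h1 : (mkC S T g).card ≤ (T.filter fun x => g x ∈ S).card := Finset.card_image_le
    have h2 : (T.filter fun x => g x ∈ S).card + (T.filter fun x => ¬ (g x ∈ S)).card
        = T.card := Finset.card_filter_add_card_filter_not _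
    have h3 := Finset.card_union_le (mkC S T g) (mkA S T g)
    have h4 : (mkA S T g).card = (T.filter fun x => ¬ (g x ∈ S)).card := rfl
    rw [hF]
    omega
  · intro p hp
    rw [hF, Finset.mem_union] at hp
    rcases hp with hp | hp
    · obtain ⟨h1, h2⟩ := hfC p hp
      calc hammingDist p (f p) = hammingDist (f p) p := hammingDist_comm _ _
        _ = hammingDist (f p) (g (f p)) := by rw [h2]
        _ ≤ ε := (hg _ h1).2
    · rw [hfA p hp]
      simp only [mkA, Finset.mem_filter] at hp
      exact (hg p hp.1).2
  · have hCsub : (mkC S T g).image f ⊆ S \ F := by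
      intro q hq
      simp only [Finset.mem_image] at hq
      obtain ⟨p, hpC, rfl⟩ := hq
      obtain ⟨h1, h2⟩ := hfC p hpC
      rw [Finset.mem_sdiff]
      refine ⟨hYS (hTY h1), ?_⟩
      rw [hF, Finset.mem_union]
      rintro (hC | hA)
      · simp only [mkC, Finset.mem_image, Finset.mem_filter] at hC
        obtain ⟨y, ⟨hy1, _⟩, hy3⟩ := hC
        exact gx_notMem hcode hTY hg hy1 (hy3 ▸ hTY h1)
      · simp only [mkA, Finset.mem_filter] at hA
        refine hA.2 ?_
        rw [h2]
        simp only [mkC, Finset.mem_image, Finset.mem_filter] at hpC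
        obtain ⟨y, ⟨_, hy2⟩, hy3⟩ := hpC
        exact hy3 ▸ hy2
    have himg : (mkA S T g).image f = (mkA S T g).image g :=
      Finset.image_congr fun p hp => hfA p hp
    show mkS S T g = (S \ F) ∪ F.image f
    rw [hF, Finset.image_union, ← hF]
    rw [himg]
    ext q
    simp only [mkS, hF, Finset.mem_union]
    constructor
    · rintro (h | h)
      · exact Or.inl h
      · exact Or.inr (Or.inr h)
    · rintro (h | h | h)
      · exact Or.inl h
      · exact Or.inl (by simpa [hF] using Finset.mem_sdiff.mp (hCsub h))
      · exact Or.inr h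

lemma mkS_inj (hcode : ∀ x ∈ Y, ∀ y ∈ Y, x ≠ y → 2 * ε + 1 ≤ hammingDist x y)
    {T₁ T₂ : Finset (Pt L)} {g₁ g₂ : Pt L → Pt L}
    (hT₁ : T₁ ⊆ Y) (hT₂ : T₂ ⊆ Y)
    (hg₁ : ∀ x ∈ T₁, g₁ x ≠ x ∧ hammingDist x (g₁ x) ≤ ε)
    (hg₂ : ∀ x ∈ T₂, g₂ x ≠ x ∧ hammingDist x (g₂ x) ≤ ε)
    (heq : mkS S T₁ g₁ = mkS S T₂ g₂) :
    T₁ = T₂ ∧ ∀ x ∈ T₁, g₁ x = g₂ x := by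
  have main : ∀ x ∈ T₁, x ∈ T₂ ∧ g₁ x = g₂ x := by
    intro x hx
    have h1 : (g₁ x ∈ S ↔ g₁ x ∉ mkS S T₁ g₁) :=
      (mkS_char hcode hT₁ hg₁ (hT₁ hx) (hg₁ x hx).1 (hg₁ x hx).2).mpr ⟨hx, rfl⟩
    rw [heq] at h1
    exact (mkS_char hcode hT₂ hg₂ (hT₁ hx) (hg₁ x hx).1 (hg₁ x hx).2).mp h1
  have main' : ∀ x ∈ T₂, x ∈ T₁ := by
    intro x hx
    have h1 : (g₂ x ∈ S ↔ g₂ x ∉ mkS S T₂ g₂) :=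
      (mkS_char hcode hT₂ hg₂ (hT₂ hx) (hg₂ x hx).1 (hg₂ x hx).2).mpr ⟨hx, rfl⟩
    rw [← heq] at h1
    exact ((mkS_char hcode hT₁ hg₁ (hT₂ hx) (hg₂ x hx).1 (hg₂ x hx).2).mp h1).1
  exact ⟨Finset.Subset.antisymm (fun x hx => (main x hx).1) main',
    fun x hx => (main x hx).2⟩

def gOf (T : Finset (Pt L)) (a : ∀ x ∈ T, Pt L) : Pt L → Pt L :=
  fun x => if h : x ∈ T then a x h else x

lemma gOf_prop {T : Finset (Pt L)} {a : ∀ x ∈ T, Pt L}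
    (ha : a ∈ T.pi fun x => pB ε x) :
    ∀ x ∈ T, gOf T a x ≠ x ∧ hammingDist x (gOf T a x) ≤ ε := by
  intro x hx
  have h := Finset.mem_pi.mp ha x hx
  simp only [pB, Finset.mem_filter, Finset.mem_univ, true_and] at h
  simp only [gOf, dif_pos hx]
  exact h

lemma card_le_ncard {α : Type*} (t ε : ℕ) (S : Finset (Pt L)) (D : Finset α)
    (Φ : α → Finset (Pt L)) (hinj : Set.InjOn Φ D)
    (hmem : ∀ a ∈ D, Φ a ∈ hamBall L 0 t ε S) :
    D.card ≤ (hamBall L 0 t ε S).ncard := by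
  calc D.card = (D.image Φ).card := (Finset.card_image_of_injOn hinj).symm
    _ = ((D.image Φ : Finset (Finset (Pt L))) : Set (Finset (Pt L))).ncard :=
        (Set.ncard_coe_finset _).symm
    _ ≤ (hamBall L 0 t ε S).ncard := by
        apply Set.ncard_le_ncard _ (Set.toFinite _)
        intro v hv
        simp only [Finset.coe_image, Set.mem_image, Finset.mem_coe] at hv
        obtain ⟨a, ha, rfl⟩ := hv
        exact hmem a ha

end Main

end Stmt16

/-- Lower bound on the size of the Hamming error ball `B^H_{0,t,ε}(S)` in terms of the
largest `ε`-substitution-correcting subcode `Y ⊆ S`, where `B = Σ_{i=1}^{ε} binom(L,i)`: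
the ball size is at least `B^{|Y|}` if `|Y| ≤ t` and at least `binom(|Y|,t)·B^t`
otherwise. -/
theorem stmt_16 (L M t ε : ℕ) (hL : 1 ≤ L) (hM : 1 ≤ M) (hML : M ≤ 2 ^ L)
    (ht : 1 ≤ t) (hε : 1 ≤ ε)
    (S : Finset (Fin L → Bool)) (hS : S.card = M)
    (Y : Finset (Fin L → Bool)) (hYS : Y ⊆ S)
    (hY : ∀ x ∈ Y, ∀ y ∈ Y, x ≠ y → 2 * ε + 1 ≤ hammingDist x y) :
    (Y.card ≤ t →
      (∑ i ∈ Finset.Icc 1 ε, L.choose i) ^ Y.card ≤ (hamBall L 0 t ε S).ncard) ∧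
    (t < Y.card →
      Y.card.choose t * (∑ i ∈ Finset.Icc 1 ε, L.choose i) ^ t ≤
        (hamBall L 0 t ε S).ncard) := by
  classical
  set B := ∑ i ∈ Finset.Icc 1 ε, L.choose i with hB
  constructor
  · -- case |Y| ≤ t
    intro h1
    set D := Y.pi (fun x => Stmt16.pB ε x) with hD
    have hcard : D.card = B ^ Y.card := by
      rw [hD, Finset.card_pi]
      calc ∏ x ∈ Y, (Stmt16.pB ε x).card = ∏ _x ∈ Y, B :=
            Finset.prod_congr rfl fun x _ => Stmt16.pB_card ε x
        _ = B ^ Y.card := Finset.prod_const B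
    rw [← hcard]
    apply Stmt16.card_le_ncard t ε S D (fun a => Stmt16.mkS S Y (Stmt16.gOf Y a))
    · intro a ha b hb heq
      rw [Finset.mem_coe] at ha hb
      have key := Stmt16.mkS_inj hY (Finset.Subset.refl Y) (Finset.Subset.refl Y)
        (Stmt16.gOf_prop ha) (Stmt16.gOf_prop hb) heq
      funext x hx
      have := key.2 x hx
      simpa [Stmt16.gOf, dif_pos hx] using this
    · intro a ha
      simp only [hD] at ha
      exact Stmt16.mkS_mem_ball t hY hYS (Finset.Subset.refl Y) h1 (Stmt16.gOf_prop ha)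
  · -- case t < |Y|
    intro h2
    set D := (Y.powersetCard t).sigma (fun T => T.pi fun x => Stmt16.pB ε x) with hD
    have hcard : D.card = Y.card.choose t * B ^ t := by
      rw [hD, Finset.card_sigma]
      have hc : ∀ T ∈ Y.powersetCard t, (T.pi fun x => Stmt16.pB ε x).card = B ^ t := by
        intro T hT
        have hTc : T.card = t := (Finset.mem_powersetCard.mp hT).2
        rw [Finset.card_pi]
        calc ∏ x ∈ T, (Stmt16.pB ε x).card = ∏ _x ∈ T, B :=
              Finset.prod_congr rfl fun x _ => Stmt16.pB_card ε x
          _ = B ^ t := by rw [Finset.prod_const, hTc]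
      rw [Finset.sum_congr rfl hc, Finset.sum_const, Finset.card_powersetCard,
        smul_eq_mul]
    rw [← hcard]
    apply Stmt16.card_le_ncard t ε S D
      (fun z => Stmt16.mkS S z.1 (Stmt16.gOf z.1 z.2))
    · rintro ⟨T₁, a₁⟩ hz₁ ⟨T₂, a₂⟩ hz₂ heq
      rw [Finset.mem_coe, Finset.mem_sigma] at hz₁ hz₂
      have hT₁Y : T₁ ⊆ Y := (Finset.mem_powersetCard.mp hz₁.1).1
      have hT₂Y : T₂ ⊆ Y := (Finset.mem_powersetCard.mp hz₂.1).1
      have key := Stmt16.mkS_inj hY hT₁Y hT₂Y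
        (Stmt16.gOf_prop hz₁.2) (Stmt16.gOf_prop hz₂.2) heq
      obtain rfl := key.1
      suffices h : a₁ = a₂ by rw [h]
      funext x hx
      have := key.2 x hx
      simpa [Stmt16.gOf, dif_pos hx] using this
    · rintro ⟨T, a⟩ hz
      simp only [hD, Finset.mem_sigma] at hz
      have hTY : T ⊆ Y := (Finset.mem_powersetCard.mp hz.1).1
      have hTc : T.card = t := (Finset.mem_powersetCard.mp hz.1).2
      exact Stmt16.mkS_mem_ball t hY hYS hTY (le_of_eq hTc) (Stmt16.gOf_prop hz.2)
end

section
/- Fix an integer ε ≥ 1 and reals β ∈ (0,1) and c ∈ [0,1). Then there exists L₀ such that for all L ≥ L₀, setting M = ⌈2^{βL}⌉, every nonempty (0,M,ε)_H error-correcting code C ⊆ X_M^L satisfies log₂ binom(2^L, M) − log₂ |C| ≥ c · M · log₂( Σ_{i=1}^{ε} binom(L, i) ). -/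
/-- `C` is an `(s,t,ε)_H` error-correcting code. -/
def isHamCode (L s t ε : ℕ) (C : Set (Finset (Fin L → Bool))) : Prop :=
  ∀ S₁ ∈ C, ∀ S₂ ∈ C, S₁ ≠ S₂ →
    hamBall L s t ε S₁ ∩ hamBall L s t ε S₂ = ∅

open Finset

private def boolEquivZMod : Bool ≃ ZMod 2 where
  toFun := fun b => if b then 1 else 0
  invFun := fun z => decide (z = 1)
  left_inv := by decide
  right_inv := by decide

private lemma exists_cover (L m eps : ℕ) (h : eps * 2 ^ m ≤ L) :
    ∃ D : Finset (Fin L → Bool),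
      D.card * 2 ^ (eps * m) = 2 ^ L ∧
      ∀ x : Fin L → Bool, ∃ y ∈ D, hammingDist x y ≤ eps := by
  classical
  -- the embedding of column indices
  obtain ⟨ι⟩ : Nonempty ((Fin eps × (Fin m → ZMod 2)) ↪ Fin L) := by
    apply Function.Embedding.nonempty_of_card_le
    simpa [Fintype.card_fun] using h
  set V := Fin eps → Fin m → ZMod 2
  let σ : (Fin L → ZMod 2) → V := fun x j => ∑ w : Fin m → ZMod 2, x (ι (j, w)) • w
  have hσadd : ∀ x y, σ (x + y) = σ x + σ y := by
    intro x y
    funext j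
    simp only [σ, Pi.add_apply, add_smul]
    rw [Finset.sum_add_distrib]
    rfl
  let xv : V → (Fin L → ZMod 2) := fun v i =>
    ∑ j : Fin eps, if (v j ≠ 0 ∧ i = ι (j, v j)) then 1 else 0
  have hxv_at : ∀ (v : V) (j₀ : Fin eps) (w : Fin m → ZMod 2),
      xv v (ι (j₀, w)) = if (v j₀ ≠ 0 ∧ w = v j₀) then 1 else 0 := by
    intro v j₀ w
    rw [show xv v (ι (j₀, w)) = ∑ j : Fin eps,
        if (v j ≠ 0 ∧ ι (j₀, w) = ι (j, v j)) then (1 : ZMod 2) else 0 from rfl]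
    rw [Finset.sum_eq_single j₀]
    · congr 1
      simp only [eq_iff_iff]
      constructor
      · rintro ⟨h1, h2⟩
        obtain ⟨-, h4⟩ := Prod.mk.injEq .. ▸ ι.injective h2
        exact ⟨h1, h4⟩
      · rintro ⟨h1, rfl⟩
        exact ⟨h1, rfl⟩
    · intro j _ hj
      rw [if_neg]
      rintro ⟨h1, h2⟩
      obtain ⟨h3, -⟩ := Prod.mk.injEq .. ▸ ι.injective h2
      exact hj h3.symm
    · simp
  have hσxv : ∀ v : V, σ (xv v) = v := by
    intro v
    funext j₀
    show (∑ w : Fin m → ZMod 2, xv v (ι (j₀, w)) • w) = v j₀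
    rw [Finset.sum_eq_single (v j₀)]
    · rw [hxv_at]
      by_cases hv : v j₀ = 0
      · simp [hv]
      · simp [hv]
    · intro w _ hw
      rw [hxv_at, if_neg (by rintro ⟨-, h⟩; exact hw h), zero_smul]
    · simp
  have hxvnorm : ∀ v : V, hammingNorm (xv v) ≤ eps := by
    intro v
    have hsub : ({i | xv v i ≠ 0} : Finset (Fin L)) ⊆
        Finset.image (fun j => ι (j, v j)) Finset.univ := by
      intro i hi
      simp only [Finset.mem_filter, Finset.mem_univ, true_and] at hi
      by_contra hni
      apply hi
      rw [show xv v i = ∑ j : Fin eps,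
        if (v j ≠ 0 ∧ i = ι (j, v j)) then (1 : ZMod 2) else 0 from rfl]
      apply Finset.sum_eq_zero
      intro j _
      rw [if_neg]
      rintro ⟨-, rfl⟩
      exact hni (Finset.mem_image_of_mem _ (Finset.mem_univ j))
    calc hammingNorm (xv v) ≤ (Finset.image (fun j => ι (j, v j)) Finset.univ).card :=
          Finset.card_le_card hsub
      _ ≤ (Finset.univ : Finset (Fin eps)).card := Finset.card_image_le
      _ = eps := by simp
  -- the kernel
  let Dz : Finset (Fin L → ZMod 2) := {x | σ x = 0}
  have hfibcard : ∀ v : V, ({x | σ x = v} : Finset (Fin L → ZMod 2)).card = Dz.card := by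
    intro v
    apply Finset.card_bij' (i := fun z _ => z + xv v) (j := fun z _ => z + xv v)
    · intro a ha
      simp only [Dz, Finset.mem_filter, Finset.mem_univ, true_and] at ha ⊢
      rw [hσadd, ha, hσxv]
      funext j k
      exact CharTwo.add_self_eq_zero _
    · intro a ha
      simp only [Dz, Finset.mem_filter, Finset.mem_univ, true_and] at ha ⊢
      rw [hσadd, ha, hσxv, zero_add]
    · intro a _
      funext i
      show a i + xv v i + xv v i = a i
      rw [add_assoc, CharTwo.add_self_eq_zero, add_zero]
    · intro a _
      funext i
      show a i + xv v i + xv v i = a i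
      rw [add_assoc, CharTwo.add_self_eq_zero, add_zero]
  have hcount : Dz.card * 2 ^ (eps * m) = 2 ^ L := by
    have h1 : (Finset.univ : Finset (Fin L → ZMod 2)).card =
        ∑ v ∈ (Finset.univ : Finset V), ({x | σ x = v} : Finset (Fin L → ZMod 2)).card :=
      Finset.card_eq_sum_card_fiberwise (fun x _ => Finset.mem_univ (σ x))
    rw [Finset.sum_congr rfl (fun v _ => hfibcard v), Finset.sum_const, smul_eq_mul] at h1
    have h2 : (Finset.univ : Finset (Fin L → ZMod 2)).card = 2 ^ L := by
      simp [Fintype.card_fun]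
    have h3 : (Finset.univ : Finset V).card = 2 ^ (eps * m) := by
      rw [Finset.card_univ]
      show Fintype.card (Fin eps → Fin m → ZMod 2) = _
      rw [Fintype.card_fun, Fintype.card_fun, ZMod.card, Fintype.card_fin, Fintype.card_fin,
        ← pow_mul, mul_comm]
    rw [h2, h3] at h1
    rw [mul_comm] at h1
    exact h1.symm
  have hcov : ∀ x : Fin L → ZMod 2, ∃ y ∈ Dz, hammingDist x y ≤ eps := by
    intro x
    refine ⟨x + xv (σ x), ?_, ?_⟩
    · simp only [Dz, Finset.mem_filter, Finset.mem_univ, true_and]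
      rw [hσadd, hσxv]
      funext j k
      exact CharTwo.add_self_eq_zero _
    · rw [hammingDist_eq_hammingNorm]
      have : x - (x + xv (σ x)) = xv (σ x) := by
        funext i
        show x i - (x i + xv (σ x) i) = xv (σ x) i
        rw [sub_add_eq_sub_sub, sub_self, zero_sub, CharTwo.neg_eq]
      rw [neg_add_cancel_left]
      exact hxvnorm _
  -- transfer to Bool
  refine ⟨Dz.image (fun x => fun i => boolEquivZMod.symm (x i)), ?_, ?_⟩
  · rw [Finset.card_image_of_injective _ ?_]
    · exact hcount
    · intro a b hab
      funext i
      exact boolEquivZMod.symm.injective (congrFun hab i)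
  · intro x
    obtain ⟨y, hy, hd⟩ := hcov (fun i => boolEquivZMod (x i))
    refine ⟨fun i => boolEquivZMod.symm (y i), Finset.mem_image_of_mem _ hy, ?_⟩
    have : x = fun i => boolEquivZMod.symm (boolEquivZMod (x i)) := by
      funext i; simp
    calc hammingDist x (fun i => boolEquivZMod.symm (y i))
        = hammingDist (fun i => boolEquivZMod.symm (boolEquivZMod (x i)))
            (fun i => boolEquivZMod.symm (y i)) := by rw [← this]
      _ = hammingDist (fun i => boolEquivZMod (x i)) y :=
          hammingDist_comp (fun _ => boolEquivZMod.symm) (fun _ => boolEquivZMod.symm.injective)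
      _ ≤ eps := hd

private lemma descF_le (q a : ℕ) (hq : 1 ≤ q) :
    ∀ M : ℕ, q ^ M * a.descFactorial M ≤ (a * q).descFactorial M := by
  intro M
  induction M with
  | zero => simp
  | succ M ih =>
    rw [Nat.descFactorial_succ, Nat.descFactorial_succ]
    have h1 : q * (a - M) ≤ a * q - M := by
      have e1 : q * (a - M) = q * a - q * M := Nat.mul_sub ..
      have e2 : M ≤ q * M := Nat.le_mul_of_pos_left M (by omega)
      rw [mul_comm a q]
      omega
    calc q ^ (M + 1) * ((a - M) * a.descFactorial M)
        = (q * (a - M)) * (q ^ M * a.descFactorial M) := by ring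
      _ ≤ (a * q - M) * ((a * q).descFactorial M) := Nat.mul_le_mul h1 ih

private lemma choose_mul_pow_le (q a M : ℕ) (hq : 1 ≤ q) :
    q ^ M * a.choose M ≤ (a * q).choose M := by
  have h := descF_le q a hq M
  rw [Nat.descFactorial_eq_factorial_mul_choose, Nat.descFactorial_eq_factorial_mul_choose] at h
  have h2 : M.factorial * (q ^ M * a.choose M) ≤ M.factorial * ((a * q).choose M) := by
    calc M.factorial * (q ^ M * a.choose M) = q ^ M * (M.factorial * a.choose M) := by ring
      _ ≤ _ := h
  exact Nat.le_of_mul_le_mul_left h2 M.factorial_pos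

private lemma choose_right_mono (N : ℕ) :
    ∀ M, 2 * M ≤ N → ∀ k ≤ M, N.choose k ≤ N.choose M := by
  intro M
  induction M with
  | zero => intro _ k hk; simp [Nat.le_zero.mp hk]
  | succ M ih =>
    intro hM2 k hk
    rcases Nat.eq_or_lt_of_le hk with rfl | h
    · exact le_rfl
    · have step : N.choose M ≤ N.choose (M + 1) :=
        Nat.choose_le_succ_of_lt_half_left (by omega)
      exact le_trans (ih (by omega) k (by omega)) step

set_option maxHeartbeats 2000000 in
/-- Asymptotic lower bound on the redundancy of `(0,M,ε)_H` error-correcting codes: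
for `M = ⌈2^{βL}⌉` and any `0 ≤ c < 1`, for all sufficiently large `L` the redundancy
is at least `c·M·log₂(Σ_{i=1}^{ε} binom(L,i))`. -/
theorem stmt_17 (ε : ℕ) (hε : 1 ≤ ε) (β c : ℝ)
    (hβ0 : 0 < β) (hβ1 : β < 1) (hc0 : 0 ≤ c) (hc1 : c < 1) :
    ∃ L₀ : ℕ, ∀ L : ℕ, L₀ ≤ L →
      ∀ C : Finset (Finset (Fin L → Bool)),
        (∀ S ∈ C, S.card = ⌈(2 : ℝ) ^ (β * L)⌉₊) →
        isHamCode L 0 (⌈(2 : ℝ) ^ (β * L)⌉₊) ε ↑C →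
        C.Nonempty →
        c * ⌈(2 : ℝ) ^ (β * L)⌉₊ *
            Real.logb 2 (∑ i ∈ Finset.Icc 1 ε, (L.choose i : ℝ)) ≤
          Real.logb 2 ((2 ^ L).choose ⌈(2 : ℝ) ^ (β * L)⌉₊) -
            Real.logb 2 C.card := by
  classical
  have hlog2 : (0:ℝ) < Real.log 2 := Real.log_pos one_lt_two
  have hεR : (1:ℝ) ≤ (ε:ℝ) := by exact_mod_cast hε
  set lε : ℝ := Real.logb 2 (ε:ℝ) with hlεdef
  have hlε0 : 0 ≤ lε := Real.logb_nonneg one_lt_two hεR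
  set T : ℝ := ((1 + (ε:ℝ)) * lε + 2 * (ε:ℝ) + 1) / ((1 - c) * (ε:ℝ)) with hTdef
  set LA : ℕ := 2 ^ ⌈T⌉₊ with hLAdef
  set aB : ℝ := β * Real.log 2 / 2 with haBdef
  have haB0 : 0 < aB := by positivity
  set LB : ℕ := max ⌈(3 : ℝ) / aB ^ 2⌉₊ 1 with hLBdef
  set KC : ℝ := (2 * (ε:ℝ) / Real.log 2 + 2) / (1 - β) with hKCdef
  set LC : ℕ := ⌈(max KC 1) ^ 2⌉₊ with hLCdef
  refine ⟨max (max ε LA) (max LB LC) + 1, ?_⟩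
  intro L hL C hcard hcode hCne
  have hmle : max (max ε LA) (max LB LC) ≤ L := by omega
  have hLε : ε ≤ L := le_trans (le_trans (le_max_left _ _) (le_max_left _ _)) hmle
  have hL1 : 1 ≤ L := le_trans hε hLε
  have hLA : LA ≤ L := le_trans (le_trans (le_max_right _ _) (le_max_left _ _)) hmle
  have hLB : LB ≤ L := le_trans (le_trans (le_max_left _ _) (le_max_right _ _)) hmle
  have hLC : LC ≤ L := le_trans (le_trans (le_max_right _ _) (le_max_right _ _)) hmle
  have hLR1 : (1:ℝ) ≤ (L:ℝ) := by exact_mod_cast hL1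
  have hLR0 : (0:ℝ) < (L:ℝ) := by linarith
  set lL : ℝ := Real.logb 2 (L:ℝ) with hlLdef
  have hlL0 : 0 ≤ lL := Real.logb_nonneg one_lt_two hLR1
  -- condition A
  have hcε : (0:ℝ) < (1 - c) * ε := by nlinarith
  have hA : (1 + (ε:ℝ)) * lε + 2 * ε + 1 ≤ (1 - c) * (ε:ℝ) * lL := by
    have h1 : T ≤ lL := by
      have h2 : ((LA:ℝ)) ≤ (L:ℝ) := by exact_mod_cast hLA
      have h3 : Real.logb 2 (LA:ℝ) ≤ lL := by
        apply Real.logb_le_logb_of_le one_lt_two _ h2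
        positivity
      have h4 : Real.logb 2 (LA:ℝ) = (⌈T⌉₊ : ℝ) := by
        rw [hLAdef]
        push_cast
        rw [Real.logb_pow, Real.logb_self_eq_one one_lt_two]
        ring
      have h5 : T ≤ (⌈T⌉₊ : ℝ) := Nat.le_ceil T
      linarith
    calc (1 + (ε:ℝ)) * lε + 2 * ε + 1 = T * ((1 - c) * ε) := by
          rw [hTdef]; field_simp; rw [div_self (sub_ne_zero.mpr (ne_of_gt hc1))]
      _ ≤ lL * ((1 - c) * ε) := by
          apply mul_le_mul_of_nonneg_right h1 (le_of_lt hcε)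
      _ = (1 - c) * (ε:ℝ) * lL := by ring
  -- condition C
  have hC : (ε:ℝ) * lL + 2 ≤ (1 - β) * L := by
    set r : ℝ := Real.sqrt (L:ℝ) with hrdef
    have hr1 : (1:ℝ) ≤ r := by
      rw [hrdef, show (1:ℝ) = Real.sqrt 1 by simp]
      exact Real.sqrt_le_sqrt hLR1
    have hrr : r * r = (L:ℝ) := Real.mul_self_sqrt (le_of_lt hLR0)
    have hrK : KC ≤ r := by
      have h2 : ((LC:ℝ)) ≤ (L:ℝ) := by exact_mod_cast hLC
      have h3 : (max KC 1) ^ 2 ≤ (L:ℝ) := le_trans (Nat.le_ceil _) h2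
      have h4 : max KC 1 ≤ r := by
        rw [hrdef, ← Real.sqrt_sq (le_trans zero_le_one (le_max_right KC 1))]
        exact Real.sqrt_le_sqrt h3
      exact le_trans (le_max_left KC 1) h4
    have hlogr : Real.log (L:ℝ) ≤ 2 * r := by
      have h1 : Real.log r ≤ r - 1 := Real.log_le_sub_one_of_pos (by linarith)
      have h2 : Real.log (Real.sqrt (L:ℝ)) = Real.log (L:ℝ) / 2 :=
        Real.log_sqrt (le_of_lt hLR0)
      rw [hrdef] at h1
      rw [h2] at h1
      linarith
    have hlbL : lL ≤ 2 * r / Real.log 2 := by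
      rw [hlLdef, Real.logb, div_le_div_iff_of_pos_right hlog2]
      exact hlogr
    have hβ' : (0:ℝ) < 1 - β := by linarith
    have hKC : (1 - β) * KC = 2 * (ε:ℝ) / Real.log 2 + 2 := by
      rw [hKCdef, mul_comm, div_mul_cancel₀ _ (ne_of_gt hβ')]
    have key : (ε:ℝ) * (2 * r / Real.log 2) + 2 ≤ (1 - β) * (r * r) := by
      have h0 : KC * r ≤ r * r := mul_le_mul_of_nonneg_right hrK (by linarith)
      have h1 : (1 - β) * (KC * r) ≤ (1 - β) * (r * r) :=
        mul_le_mul_of_nonneg_left h0 (by linarith)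
      have h2 : (1 - β) * (KC * r) = (2 * (ε:ℝ) / Real.log 2 + 2) * r := by
        rw [← mul_assoc, hKC]
      rw [h2] at h1
      calc (ε:ℝ) * (2 * r / Real.log 2) + 2
          = (2 * (ε:ℝ) / Real.log 2) * r + 2 := by ring
        _ ≤ (2 * (ε:ℝ) / Real.log 2) * r + 2 * r := by
            have : (0:ℝ) ≤ 2 * (ε:ℝ) / Real.log 2 := by positivity
            linarith
        _ = (2 * (ε:ℝ) / Real.log 2 + 2) * r := by ring
        _ ≤ (1 - β) * (r * r) := h1
    have hεlL : (ε:ℝ) * lL ≤ (ε:ℝ) * (2 * r / Real.log 2) :=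
      mul_le_mul_of_nonneg_left hlbL (by positivity)
    calc (ε:ℝ) * lL + 2 ≤ (ε:ℝ) * (2 * r / Real.log 2) + 2 := by linarith
      _ ≤ (1 - β) * (r * r) := key
      _ = (1 - β) * (L:ℝ) := by rw [hrr]
  -- M
  set M : ℕ := ⌈(2 : ℝ) ^ (β * (L:ℝ))⌉₊ with hMdef
  have hpow0 : (0:ℝ) < (2:ℝ) ^ (β * (L:ℝ)) := Real.rpow_pos_of_pos two_pos _
  have hM1 : 1 ≤ M := Nat.one_le_ceil_iff.mpr hpow0
  have hMge : (2:ℝ) ^ (β * (L:ℝ)) ≤ (M:ℝ) := Nat.le_ceil _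
  have hMle : (M:ℝ) ≤ (2:ℝ) ^ (β * (L:ℝ)) + 1 :=
    le_of_lt (Nat.ceil_lt_add_one (le_of_lt hpow0))
  -- condition B : L + 2 ≤ M
  have hB : (L:ℝ) + 2 ≤ (M:ℝ) := by
    have hLBr : ((max ⌈(3 : ℝ) / aB ^ 2⌉₊ 1 : ℕ) : ℝ) ≤ (L:ℝ) := by exact_mod_cast hLB
    have h3a : (3:ℝ) / aB ^ 2 ≤ (L:ℝ) := by
      have := Nat.le_ceil ((3:ℝ) / aB ^ 2)
      have h' : ((⌈(3 : ℝ) / aB ^ 2⌉₊ : ℕ) : ℝ) ≤ (L:ℝ) := by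
        refine le_trans ?_ hLBr
        exact_mod_cast Nat.cast_le.mpr (le_max_left _ _)
      linarith
    have haL : 3 ≤ aB ^ 2 * (L:ℝ) := by
      rw [div_le_iff₀ (by positivity)] at h3a
      nlinarith
    set t : ℝ := Real.log 2 * (β * (L:ℝ)) with htdef
    have ht0 : 0 ≤ t := by positivity
    have htaB : aB * (L:ℝ) = t / 2 := by rw [haBdef, htdef]; ring
    have hexp : (2:ℝ) ^ (β * (L:ℝ)) = Real.exp t := by
      rw [Real.rpow_def_of_pos two_pos, htdef]
    have hsq : (1 + t / 2) ^ 2 ≤ Real.exp t := by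
      have h1 : t / 2 + 1 ≤ Real.exp (t / 2) := Real.add_one_le_exp _
      have h2 : Real.exp (t / 2) * Real.exp (t / 2) = Real.exp t := by
        rw [← Real.exp_add]; ring_nf
      have h3 : (1 + t / 2) * (1 + t / 2) ≤ Real.exp (t / 2) * Real.exp (t / 2) :=
        mul_self_le_mul_self (by linarith) (by linarith)
      calc (1 + t / 2) ^ 2 = (1 + t / 2) * (1 + t / 2) := by ring
        _ ≤ Real.exp (t / 2) * Real.exp (t / 2) := h3
        _ = Real.exp t := h2
    have hquad : (L:ℝ) + 2 ≤ (1 + t / 2) ^ 2 := by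
      have h1 : aB ^ 2 * (L:ℝ) * (L:ℝ) = (t / 2) ^ 2 := by
        rw [← htaB]; ring
      have h2 : 3 * (L:ℝ) ≤ aB ^ 2 * (L:ℝ) * (L:ℝ) := by
        have := mul_le_mul_of_nonneg_right haL (le_of_lt hLR0)
        linarith
      have h4 : (t / 2) ^ 2 ≤ (1 + t / 2) ^ 2 := by nlinarith
      linarith
    have hMge' : Real.exp t ≤ (M:ℝ) := by rw [← hexp]; exact hMge
    linarith
  -- the covering code
  set m : ℕ := Nat.log 2 (L / ε) with hmdef
  have hLdε : 1 ≤ L / ε := (Nat.one_le_div_iff (by omega)).mpr hLε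
  have hcovhyp : ε * 2 ^ m ≤ L := by
    have h1 : 2 ^ m ≤ L / ε := Nat.pow_log_le_self 2 (by omega)
    calc ε * 2 ^ m ≤ ε * (L / ε) := Nat.mul_le_mul_left _ h1
      _ = (L / ε) * ε := mul_comm _ _
      _ ≤ L := Nat.div_mul_le_self L ε
  obtain ⟨D, hDcard, hDcov⟩ := exists_cover L m ε hcovhyp
  choose g hgD hgdist using hDcov
  -- m bounds
  have hmlogb : (m:ℝ) ≤ lL := by
    have h1 : (2:ℕ) ^ m ≤ L := le_trans (Nat.le_mul_of_pos_left _ (by omega)) hcovhyp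
    have h2 : ((2:ℝ)) ^ (m:ℕ) ≤ (L:ℝ) := by exact_mod_cast h1
    have h3 : Real.logb 2 ((2:ℝ) ^ (m:ℕ)) ≤ lL :=
      Real.logb_le_logb_of_le one_lt_two (by positivity) h2
    rwa [Real.logb_pow, Real.logb_self_eq_one one_lt_two, mul_one] at h3
  have hmge : lL ≤ lε + (m:ℝ) + 2 := by
    have h1 : L / ε < 2 ^ (m + 1) := Nat.lt_pow_succ_log_self one_lt_two _
    have h2 : L < ε * 2 ^ (m + 2) := by
      have hdm := Nat.div_add_mod L ε
      have hmod : L % ε < ε := Nat.mod_lt _ (by omega)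
      have hmul : ε * (L / ε) ≤ ε * (2 ^ (m + 1) - 1) := Nat.mul_le_mul_left _ (by omega)
      have hmul2 : ε * (2 ^ (m + 1) - 1) + ε = ε * 2 ^ (m + 1) := by
        have : (2:ℕ) ^ (m + 1) - 1 + 1 = 2 ^ (m + 1) := by
          have : (1:ℕ) ≤ 2 ^ (m + 1) := Nat.one_le_two_pow
          omega
        calc ε * (2 ^ (m + 1) - 1) + ε = ε * ((2 ^ (m + 1) - 1) + 1) := by ring
          _ = ε * 2 ^ (m + 1) := by rw [this]
      have hmul3 : ε * 2 ^ (m + 1) < ε * 2 ^ (m + 2) := by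
        have hp : (2:ℕ) ^ (m + 1) < 2 ^ (m + 2) :=
          Nat.pow_lt_pow_right one_lt_two (by omega)
        exact mul_lt_mul_of_pos_left hp (by omega)
      omega
    have h3 : (L:ℝ) < (ε:ℝ) * (2:ℝ) ^ (m + 2 : ℕ) := by exact_mod_cast h2
    have h4 : lL ≤ Real.logb 2 ((ε:ℝ) * (2:ℝ) ^ (m + 2 : ℕ)) :=
      Real.logb_le_logb_of_le one_lt_two hLR0 (le_of_lt h3)
    rw [Real.logb_mul (by positivity) (by positivity), Real.logb_pow,
      Real.logb_self_eq_one one_lt_two, mul_one, ← hlεdef] at h4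
    push_cast at h4
    linarith
  -- ball membership
  have hball : ∀ S ∈ C, (S.image g) ∈ hamBall L 0 M ε S := by
    intro S hS
    refine ⟨∅, ∅, S, g, Finset.disjoint_empty_left _, Finset.disjoint_empty_left _,
      Finset.disjoint_empty_left _, by simp, by simp, le_of_eq (hcard S hS), 
      fun x _ => hgdist x, by simp⟩
  -- counting
  set B : Finset (Finset (Fin L → Bool)) :=
    (Finset.range (M + 1)).biUnion (fun k => Finset.powersetCard k D) with hBdef
  have h2M : 2 * M ≤ D.card := by
    have hcast : ((2 * M * 2 ^ (ε * m) : ℕ) : ℝ) ≤ ((2 ^ L : ℕ) : ℝ) := by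
      push_cast
      have e1 : (2:ℝ) ^ (ε * m : ℕ) = (2:ℝ) ^ ((ε * m : ℕ) : ℝ) := by
        rw [Real.rpow_natCast]
      have e2 : ((2:ℕ):ℝ) ^ (L : ℕ) = (2:ℝ) ^ ((L : ℕ) : ℝ) := by
        rw [Real.rpow_natCast]; norm_num
      have hεm : ((ε * m : ℕ) : ℝ) ≤ (ε:ℝ) * lL := by
        push_cast
        exact mul_le_mul_of_nonneg_left hmlogb (by positivity)
      have hexpo : β * (L:ℝ) + 2 + ((ε * m : ℕ) : ℝ) ≤ (L:ℝ) := by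
        have hβL : β * (L:ℝ) + ((1 - β) * (L:ℝ)) = (L:ℝ) := by ring
        linarith
      have hpowle : (2:ℝ) ^ (β * (L:ℝ) + 2 + ((ε * m : ℕ) : ℝ)) ≤ (2:ℝ) ^ ((L:ℕ):ℝ) :=
        Real.rpow_le_rpow_of_exponent_le one_le_two hexpo
      have hMle2 : (M:ℝ) ≤ 2 * (2:ℝ) ^ (β * (L:ℝ)) := by
        have h1 : (1:ℝ) ≤ (2:ℝ) ^ (β * (L:ℝ)) := by
          apply Real.one_le_rpow one_le_two (by positivity)
        linarith
      have h22 : (2:ℝ) ^ (2:ℝ) = 4 := by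
        rw [show (2:ℝ) = ((2:ℕ):ℝ) from by norm_num, Real.rpow_natCast]
        norm_num
      have hsplit : (2:ℝ) ^ (β * (L:ℝ) + 2 + ((ε * m : ℕ) : ℝ))
          = (2:ℝ) ^ (β * (L:ℝ)) * 4 * (2:ℝ) ^ ((ε * m : ℕ) : ℝ) := by
        rw [Real.rpow_add two_pos, Real.rpow_add two_pos, h22]
      have hq0 : (0:ℝ) < (2:ℝ) ^ ((ε * m : ℕ) : ℝ) := Real.rpow_pos_of_pos two_pos _
      calc (2:ℝ) * (M:ℝ) * (2:ℝ) ^ (ε * m : ℕ)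
          = (2 * (M:ℝ)) * (2:ℝ) ^ ((ε * m : ℕ) : ℝ) := by rw [← e1]
        _ ≤ (4 * (2:ℝ) ^ (β * (L:ℝ))) * (2:ℝ) ^ ((ε * m : ℕ) : ℝ) := by
            apply mul_le_mul_of_nonneg_right _ (le_of_lt hq0)
            linarith
        _ = (2:ℝ) ^ (β * (L:ℝ) + 2 + ((ε * m : ℕ) : ℝ)) := by rw [hsplit]; ring
        _ ≤ (2:ℝ) ^ ((L:ℕ):ℝ) := hpowle
        _ = ((2:ℕ):ℝ) ^ (L:ℕ) := e2.symm
        _ = (2:ℝ) ^ (L:ℕ) := by norm_num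
    have hnat : 2 * M * 2 ^ (ε * m) ≤ 2 ^ L := by exact_mod_cast hcast
    rw [← hDcard] at hnat
    exact Nat.le_of_mul_le_mul_right hnat (pow_pos (by omega) _)
  have hD2L : D.card ≤ 2 ^ L := by
    rw [← hDcard]
    exact Nat.le_mul_of_pos_right _ (pow_pos (by omega) _)
  have hM2L : M ≤ 2 ^ L := by omega
  have hchpos2 : 0 < (2 ^ L).choose M := Nat.choose_pos hM2L
  have hchposD : 0 < D.card.choose M := Nat.choose_pos (by omega)
  have hCle : C.card ≤ (M + 1) * D.card.choose M := by
    have hinto : ∀ S ∈ C, S.image g ∈ B := by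
      intro S hS
      rw [hBdef]
      apply Finset.mem_biUnion.mpr
      refine ⟨(S.image g).card, Finset.mem_range.mpr ?_, ?_⟩
      · have := Finset.card_image_le (s := S) (f := g)
        rw [hcard S hS] at this
        omega
      · apply Finset.mem_powersetCard.mpr
        refine ⟨?_, rfl⟩
        intro y hy
        obtain ⟨x, -, rfl⟩ := Finset.mem_image.mp hy
        exact hgD x
    have hinj : Set.InjOn (fun S : Finset (Fin L → Bool) => S.image g)
        (↑C : Set (Finset (Fin L → Bool))) := by
      intro S₁ hS₁ S₂ hS₂ heq
      by_contra hne
      have h0 := hcode S₁ hS₁ S₂ hS₂ hne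
      have hm1 : (S₁.image g) ∈ hamBall L 0 M ε S₁ := hball S₁ hS₁
      have hm2 : (S₁.image g) ∈ hamBall L 0 M ε S₂ := by
        have := hball S₂ hS₂
        simpa [← heq] using this
      have : (S₁.image g) ∈ hamBall L 0 M ε S₁ ∩ hamBall L 0 M ε S₂ := ⟨hm1, hm2⟩
      rw [h0] at this
      exact this
    have h1 : C.card ≤ B.card := Finset.card_le_card_of_injOn _ hinto hinj
    have h2 : B.card ≤ ∑ k ∈ Finset.range (M + 1), (Finset.powersetCard k D).card :=
      Finset.card_biUnion_le
    have h3 : ∑ k ∈ Finset.range (M + 1), (Finset.powersetCard k D).card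
        = ∑ k ∈ Finset.range (M + 1), D.card.choose k := by
      apply Finset.sum_congr rfl
      intro k _
      exact Finset.card_powersetCard k D
    have h4 : ∑ k ∈ Finset.range (M + 1), D.card.choose k
        ≤ ∑ k ∈ Finset.range (M + 1), D.card.choose M := by
      apply Finset.sum_le_sum
      intro k hk
      exact choose_right_mono D.card M h2M k (by simpa [Nat.lt_succ_iff] using hk)
    have h5 : ∑ k ∈ Finset.range (M + 1), D.card.choose M = (M + 1) * D.card.choose M := by
      rw [Finset.sum_const, Finset.card_range, smul_eq_mul]
    omega
  have hC1 : 1 ≤ C.card := Finset.card_pos.mpr hCne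
  -- the binomial ratio bound
  have hqM : D.card.choose M * (2 ^ (ε * m)) ^ M ≤ (2 ^ L).choose M := by
    have := choose_mul_pow_le (2 ^ (ε * m)) D.card M Nat.one_le_two_pow
    rw [hDcard] at this
    linarith
  -- now the real chain
  set V : ℝ := ∑ i ∈ Finset.Icc 1 ε, (L.choose i : ℝ) with hVdef
  have hVL : (L:ℝ) ≤ V := by
    rw [hVdef]
    have h1 : (1:ℕ) ∈ Finset.Icc 1 ε := Finset.mem_Icc.mpr ⟨le_refl 1, hε⟩
    have := Finset.single_le_sum (f := fun i => (L.choose i : ℝ))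
      (fun i _ => by positivity) h1
    simpa using this
  have hVpos : (0:ℝ) < V := lt_of_lt_of_le hLR0 hVL
  have hlogV : Real.logb 2 V ≤ lε + (ε:ℝ) * lL := by
    have hVle : V ≤ (ε:ℝ) * (L:ℝ) ^ (ε:ℕ) := by
      rw [hVdef]
      have h1 : ∀ i ∈ Finset.Icc 1 ε, (L.choose i : ℝ) ≤ (L:ℝ) ^ (ε:ℕ) := by
        intro i hi
        obtain ⟨-, hi2⟩ := Finset.mem_Icc.mp hi
        calc (L.choose i : ℝ) ≤ (L:ℝ) ^ i := by exact_mod_cast Nat.choose_le_pow L i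
          _ ≤ (L:ℝ) ^ (ε:ℕ) := pow_le_pow_right₀ hLR1 hi2
      calc V ≤ (Finset.Icc 1 ε).card • ((L:ℝ) ^ (ε:ℕ)) := Finset.sum_le_card_nsmul _ _ _ h1
        _ = (ε:ℝ) * (L:ℝ) ^ (ε:ℕ) := by
            rw [Nat.card_Icc]
            simp [nsmul_eq_mul]
    calc Real.logb 2 V ≤ Real.logb 2 ((ε:ℝ) * (L:ℝ) ^ (ε:ℕ)) :=
          Real.logb_le_logb_of_le one_lt_two hVpos hVle
      _ = lε + (ε:ℝ) * lL := by
          rw [Real.logb_mul (by positivity) (by positivity), Real.logb_pow]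
  -- log of code size
  have hs1 : Real.logb 2 (C.card : ℝ) ≤ Real.logb 2 (((M + 1) * D.card.choose M : ℕ) : ℝ) := by
    apply Real.logb_le_logb_of_le one_lt_two (by exact_mod_cast hC1)
    exact_mod_cast hCle
  have hs2 : Real.logb 2 (((M + 1) * D.card.choose M : ℕ) : ℝ)
      = Real.logb 2 ((M:ℝ) + 1) + Real.logb 2 (D.card.choose M : ℝ) := by
    have hne : ((D.card.choose M : ℕ) : ℝ) ≠ 0 := by
      have : (0:ℝ) < ((D.card.choose M : ℕ) : ℝ) := by exact_mod_cast hchposD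
      linarith
    push_cast
    push_cast at hne
    rw [Real.logb_mul (by positivity) hne]
  have hs3 : Real.logb 2 (D.card.choose M : ℝ) + (M:ℝ) * ((ε:ℝ) * (m:ℝ))
      ≤ Real.logb 2 (((2 ^ L).choose M : ℕ) : ℝ) := by
    have hcast : ((D.card.choose M * (2 ^ (ε * m)) ^ M : ℕ) : ℝ)
        ≤ (((2 ^ L).choose M : ℕ) : ℝ) := by exact_mod_cast hqM
    have hprod : ((D.card.choose M * (2 ^ (ε * m)) ^ M : ℕ) : ℝ)
        = (D.card.choose M : ℝ) * (2:ℝ) ^ (ε * m * M) := by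
      push_cast
      rw [← pow_mul]
    rw [hprod] at hcast
    have hDpos : (0:ℝ) < (D.card.choose M : ℝ) := by exact_mod_cast hchposD
    have hlogle : Real.logb 2 ((D.card.choose M : ℝ) * (2:ℝ) ^ (ε * m * M))
        ≤ Real.logb 2 (((2 ^ L).choose M : ℕ) : ℝ) :=
      Real.logb_le_logb_of_le one_lt_two (by positivity) hcast
    rw [Real.logb_mul (ne_of_gt hDpos) (by positivity), Real.logb_pow,
      Real.logb_self_eq_one one_lt_two, mul_one] at hlogle
    have : ((ε * m * M : ℕ) : ℝ) = (M:ℝ) * ((ε:ℝ) * (m:ℝ)) := by push_cast; ring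
    linarith [this ▸ hlogle]
  have hs4 : Real.logb 2 ((M:ℝ) + 1) ≤ (L:ℝ) + 2 := by
    have h1 : (M:ℝ) + 1 ≤ (2:ℝ) ^ (β * (L:ℝ) + 2) := by
      rw [Real.rpow_add two_pos]
      have h2 : ((2:ℝ) ^ (2:ℝ)) = 4 := by
        rw [show (2:ℝ) = ((2:ℕ):ℝ) from by norm_num, Real.rpow_natCast]
        norm_num
      have h3 : (1:ℝ) ≤ (2:ℝ) ^ (β * (L:ℝ)) := Real.one_le_rpow one_le_two (by positivity)
      rw [h2]
      linarith
    have h4 : Real.logb 2 ((M:ℝ) + 1) ≤ β * (L:ℝ) + 2 := by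
      have := Real.logb_le_logb_of_le one_lt_two (by positivity : (0:ℝ) < (M:ℝ) + 1) h1
      rwa [Real.logb_rpow two_pos (by norm_num)] at this
    have h5 : β * (L:ℝ) ≤ (L:ℝ) := by nlinarith
    linarith
  -- the numeric core
  have hinner : c * (lε + (ε:ℝ) * lL) + 1 ≤ (ε:ℝ) * (lL - lε - 2) := by
    have hclε : c * lε ≤ lε := by nlinarith
    nlinarith [hA]
  have hmlow : lL - lε - 2 ≤ (m:ℝ) := by linarith [hmge]
  have hM0 : (0:ℝ) ≤ (M:ℝ) := by positivity
  have hkey : c * (M:ℝ) * Real.logb 2 V ≤ (M:ℝ) * ((ε:ℝ) * (m:ℝ)) - ((L:ℝ) + 2) := by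
    have k1 : c * Real.logb 2 V ≤ c * (lε + (ε:ℝ) * lL) :=
      mul_le_mul_of_nonneg_left hlogV hc0
    have k2 : (M:ℝ) * (c * Real.logb 2 V) ≤ (M:ℝ) * (c * (lε + (ε:ℝ) * lL)) :=
      mul_le_mul_of_nonneg_left k1 hM0
    have k3 : (ε:ℝ) * (lL - lε - 2) ≤ (ε:ℝ) * (m:ℝ) :=
      mul_le_mul_of_nonneg_left hmlow (by positivity)
    have k4 : (M:ℝ) * (c * (lε + (ε:ℝ) * lL) + 1) ≤ (M:ℝ) * ((ε:ℝ) * (lL - lε - 2)) :=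
      mul_le_mul_of_nonneg_left hinner hM0
    have k5 : (M:ℝ) * ((ε:ℝ) * (lL - lε - 2)) ≤ (M:ℝ) * ((ε:ℝ) * (m:ℝ)) :=
      mul_le_mul_of_nonneg_left k3 hM0
    nlinarith [hB]
  -- final assembly
  have hfin : Real.logb 2 (((2 ^ L).choose M : ℕ) : ℝ) - Real.logb 2 (C.card : ℝ)
      ≥ (M:ℝ) * ((ε:ℝ) * (m:ℝ)) - ((L:ℝ) + 2) := by
    linarith [hs1, hs2 ▸ hs1, hs3, hs4]
  linarith [hkey, hfin]
end

section
/- Fix an integer ε ≥ 1 and reals β ∈ (0,1) and c ∈ [0,1). Then there exists L₀ such that for all L ≥ L₀, setting M = ⌈2^{βL}⌉, every nonempty (0,M,ε)_L error-correcting code C ⊆ X_M^L satisfies log₂ binom(2^L, M) − log₂ |C| ≥ c · M · ( log₂( Σ_{i=0}^{ε} binom(L+ε, i) ) − ε ). -/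
open Finset

/-- `y` is within `ε` insertions/deletions of `x`. -/
def withinLev (ε : ℕ) (x y : List Bool) : Prop :=
  ∃ z : List Bool, z.Sublist x ∧ z.Sublist y ∧
    (x.length - z.length) + (y.length - z.length) ≤ ε

/-- The Levenshtein error ball `B^Lev_{s,t,ε}(S)`. -/
def levBall (s t ε : ℕ) (S : Finset (List Bool)) : Set (Finset (List Bool)) :=
  { S' | ∃ (U Lo F : Finset (List Bool)) (f : List Bool → List Bool),
      Disjoint U Lo ∧ Disjoint U F ∧ Disjoint Lo F ∧
      U ∪ Lo ∪ F = S ∧ Lo.card ≤ s ∧ F.card ≤ t ∧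
      (∀ x ∈ F, withinLev ε x (f x)) ∧
      S' = U ∪ F.image f }

/-- `C` is an `(s,t,ε)_L` error-correcting code. -/
def isLevCode (s t ε : ℕ) (C : Set (Finset (List Bool))) : Prop :=
  ∀ S₁ ∈ C, ∀ S₂ ∈ C, S₁ ≠ S₂ →
    levBall s t ε S₁ ∩ levBall s t ε S₂ = ∅


/-- All binary words of length `n`. -/
def allWords : ℕ → Finset (List Bool)
  | 0 => {[]}
  | n+1 => ((allWords n).image (true :: ·)) ∪ ((allWords n).image (false :: ·))

lemma mem_allWords {n : ℕ} {x : List Bool} : x ∈ allWords n ↔ x.length = n := by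
  induction n generalizing x with
  | zero => simp [allWords, List.length_eq_zero_iff]
  | succ n ih =>
    cases x with
    | nil => simp [allWords, ih]
    | cons b t => cases b <;> simp [allWords, ih]

lemma card_allWords (n : ℕ) : (allWords n).card = 2 ^ n := by
  have hinj : ∀ b : Bool, Function.Injective (b :: · : List Bool → List Bool) :=
    fun b u v h => by simpa using h
  induction n with
  | zero => rfl
  | succ n ih =>
    rw [allWords, Finset.card_union_of_disjoint, Finset.card_image_of_injective _ (hinj true),
      Finset.card_image_of_injective _ (hinj false), ih]
    · ring
    · rw [Finset.disjoint_left]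
      rintro a ha hb
      simp only [Finset.mem_image] at ha hb
      obtain ⟨u, -, hu⟩ := ha
      obtain ⟨v, -, hv⟩ := hb
      rw [← hv] at hu; simpa using hu

/-- Number of runs (maximal constant blocks). -/
def runs : List Bool → ℕ
  | [] => 0
  | [_] => 1
  | a :: b :: t => (if a = b then 0 else 1) + runs (b :: t)

lemma runs_cons_le (b : Bool) (t : List Bool) : runs (b :: t) ≤ runs t + 1 := by
  cases t with
  | nil => simp [runs]
  | cons c t' => by_cases h : b = c <;> simp [runs, h] <;> omega

/-- `subCount e x` = number of sublists of `x` of length `x.length - e` (no truncation). -/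
def subCount (e : ℕ) (x : List Bool) : ℕ :=
  (x.sublists.toFinset.filter (fun u => u.length + e = x.length)).card

lemma mem_subCount_set {e : ℕ} {x u : List Bool} :
    u ∈ x.sublists.toFinset.filter (fun u => u.length + e = x.length) ↔
      u.Sublist x ∧ u.length + e = x.length := by
  simp [List.mem_sublists]

lemma one_le_subCount_zero (x : List Bool) : 1 ≤ subCount 0 x := by
  have : x ∈ x.sublists.toFinset.filter (fun u => u.length + 0 = x.length) := by
    simp [List.mem_sublists]
  exact Finset.card_pos.mpr ⟨x, this⟩

lemma subCount_cons_le (e : ℕ) (b : Bool) (t : List Bool) :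
    subCount e t ≤ subCount e (b :: t) := by
  classical
  have hinj : Function.Injective (b :: · : List Bool → List Bool) :=
    fun u v h => by simpa using h
  unfold subCount
  apply Finset.card_le_card_of_injOn (b :: ·)
  · intro u hu
    rw [Finset.mem_coe, mem_subCount_set] at hu ⊢
    exact ⟨hu.1.cons₂ b, by simp [hu.2]; omega⟩
  · exact fun u _ v _ h => hinj h

lemma subCount_step {b c : Bool} (hbc : b ≠ c) (t' : List Bool) (e : ℕ) :
    subCount (e+1) (c :: t') + subCount e t' ≤ subCount (e+1) (b :: c :: t') := by
  classical
  have hinjb : Function.Injective (b :: · : List Bool → List Bool) :=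
    fun u v h => by simpa using h
  have hinjc : Function.Injective (c :: · : List Bool → List Bool) :=
    fun u v h => by simpa using h
  have h₁ : ((c :: t').sublists.toFinset.filter
      (fun u => u.length + (e+1) = (c :: t').length)).image (b :: ·) ⊆
      (b :: c :: t').sublists.toFinset.filter
        (fun u => u.length + (e+1) = (b :: c :: t').length) := by
    intro u hu
    simp only [Finset.mem_image] at hu
    obtain ⟨v, hv, rfl⟩ := hu
    rw [mem_subCount_set] at hv ⊢
    refine ⟨hv.1.cons₂ b, ?_⟩
    have := hv.2
    simp only [List.length_cons] at this ⊢
    omega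
  have h₂ : (t'.sublists.toFinset.filter
      (fun u => u.length + e = t'.length)).image (c :: ·) ⊆
      (b :: c :: t').sublists.toFinset.filter
        (fun u => u.length + (e+1) = (b :: c :: t').length) := by
    intro u hu
    simp only [Finset.mem_image] at hu
    obtain ⟨v, hv, rfl⟩ := hu
    rw [mem_subCount_set] at hv ⊢
    refine ⟨(hv.1.cons₂ c).cons b, ?_⟩
    have := hv.2
    simp only [List.length_cons] at this ⊢
    omega
  have hdisj : Disjoint ((( c :: t').sublists.toFinset.filter
      (fun u => u.length + (e+1) = (c :: t').length)).image (b :: ·))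
      ((t'.sublists.toFinset.filter
      (fun u => u.length + e = t'.length)).image (c :: ·)) := by
    rw [Finset.disjoint_left]
    rintro a ha hb'
    simp only [Finset.mem_image] at ha hb'
    obtain ⟨u, -, hu⟩ := ha
    obtain ⟨v, -, hv⟩ := hb'
    rw [← hv] at hu
    injection hu with h1 h2
    exact hbc h1
  calc subCount (e+1) (c :: t') + subCount e t'
      = ((((c :: t').sublists.toFinset.filter
          (fun u => u.length + (e+1) = (c :: t').length)).image (b :: ·)) ∪
         ((t'.sublists.toFinset.filter
          (fun u => u.length + e = t'.length)).image (c :: ·))).card := by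
        rw [Finset.card_union_of_disjoint hdisj,
          Finset.card_image_of_injective _ hinjb, Finset.card_image_of_injective _ hinjc]
        rfl
    _ ≤ subCount (e+1) (b :: c :: t') :=
        Finset.card_le_card (Finset.union_subset h₁ h₂)

lemma choose_runs_le_subCount : ∀ (n : ℕ) (x : List Bool), x.length = n →
    ∀ e, (runs x / 2).choose e ≤ subCount e x := by
  intro n
  induction n using Nat.strong_induction_on with
  | _ n ih =>
    intro x hx e
    match x with
    | [] =>
      cases e with
      | zero => simpa [runs] using one_le_subCount_zero []
      | succ e => simp [runs, Nat.choose_eq_zero_of_lt]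
    | [b] =>
      cases e with
      | zero => simpa [runs] using one_le_subCount_zero [b]
      | succ e => simp [runs, Nat.choose_eq_zero_of_lt]
    | b :: c :: t' =>
      by_cases hbc : b = c
      · subst hbc
        have h1 : runs (b :: b :: t') = runs (b :: t') := by simp [runs]
        have h2 : (b :: t').length = n - 1 := by
          simp only [List.length_cons] at hx ⊢; omega
        calc (runs (b :: b :: t') / 2).choose e
            ≤ subCount e (b :: t') := by
              rw [h1]
              exact ih (n-1) (by simp only [List.length_cons] at hx; omega) (b :: t') h2 e
          _ ≤ subCount e (b :: b :: t') := subCount_cons_le e b _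
      · cases e with
        | zero => simpa using one_le_subCount_zero (b :: c :: t')
        | succ e =>
          have hr : runs (b :: c :: t') = runs (c :: t') + 1 := by
            simp [runs, hbc]; omega
          have ht' : runs t' + 1 ≥ runs (c :: t') := runs_cons_le c t'
          have key : ((runs (c :: t') + 1) / 2).choose (e+1) ≤
              (runs (c :: t') / 2).choose (e+1) + (runs t' / 2).choose e := by
            rcases Nat.even_or_odd (runs (c :: t')) with ⟨m, hm⟩ | ⟨m, hm⟩
            · have heq : (runs (c :: t') + 1) / 2 = runs (c :: t') / 2 := by omega
              rw [heq]; omega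
            · have h2 : (runs (c :: t') + 1) / 2 = m + 1 := by omega
              have h3 : runs (c :: t') / 2 = m := by omega
              have h4 : m ≤ runs t' / 2 := by omega
              rw [h2, h3, Nat.choose_succ_succ]
              have hcc := Nat.choose_le_choose e h4
              simp only [Nat.succ_eq_add_one]
              omega
          have i1 := ih (n-1) (by simp only [List.length_cons] at hx; omega) (c :: t')
            (by simp only [List.length_cons] at hx ⊢; omega) (e+1)
          have i2 := ih (n-2) (by simp only [List.length_cons] at hx; omega) t'
            (by simp only [List.length_cons] at hx ⊢; omega) e
          have hstep := subCount_step hbc t' e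
          have : (runs (b :: c :: t') / 2).choose (e+1) ≤
              (runs (c :: t') / 2).choose (e+1) + (runs t' / 2).choose e := by
            rw [hr]; exact key
          omega

lemma subCount_eq_filter_card (e : ℕ) (x : List Bool) (he : e ≤ x.length) :
    ((allWords (x.length - e)).filter (fun u => u.Sublist x)).card = subCount e x := by
  classical
  congr 1
  ext u
  simp only [Finset.mem_filter, mem_allWords, List.mem_toFinset, List.mem_sublists]
  constructor
  · rintro ⟨h1, h2⟩; exact ⟨h2, by omega⟩
  · rintro ⟨h1, h2⟩; exact ⟨by omega, h1⟩

lemma greedy_cover {α β : Type} [DecidableEq α] [DecidableEq β]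
    (U : Finset α) (X : Finset β) (N : β → Finset α) (R : ℕ) (hR : 0 < R)
    (hN : ∀ x ∈ X, N x ⊆ U ∧ R ≤ (N x).card) (hRU : R ≤ U.card) :
    ∀ k : ℕ, ∃ Y : Finset α, Y ⊆ U ∧ Y.card ≤ k ∧
      ((X.filter (fun x => ∀ y ∈ Y, y ∉ N x)).card : ℝ) ≤
        (X.card : ℝ) * (1 - (R : ℝ) / (U.card : ℝ)) ^ k := by
  have hU0 : 0 < U.card := lt_of_lt_of_le hR hRU
  have hq0 : (0:ℝ) ≤ 1 - (R : ℝ) / (U.card : ℝ) := by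
    rw [sub_nonneg, div_le_one (by positivity)]
    exact_mod_cast hRU
  intro k
  induction k with
  | zero =>
    refine ⟨∅, Finset.empty_subset _, le_refl _, ?_⟩
    simp only [Finset.notMem_empty, pow_zero, mul_one]
    exact_mod_cast Finset.card_le_card (Finset.filter_subset _ _)
  | succ k ihk =>
    obtain ⟨Y, hYU, hYc, hYb⟩ := ihk
    set W := X.filter (fun x => ∀ y ∈ Y, y ∉ N x) with hW
    by_cases hWe : W = ∅
    · refine ⟨Y, hYU, le_trans hYc (Nat.le_succ k), ?_⟩
      rw [← hW, hWe]
      simp only [Finset.card_empty, Nat.cast_zero]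
      positivity
    · -- double counting to find a good element u
      have hWX : W ⊆ X := Finset.filter_subset _ _
      have hsum : (R * W.card : ℕ) ≤ ∑ x ∈ W, (N x).card := by
        rw [mul_comm]
        exact Finset.card_nsmul_le_sum W _ R (fun x hx => (hN x (hWX hx)).2)
      have hswap : ∑ x ∈ W, (N x).card = ∑ u ∈ U, (W.filter (fun x => u ∈ N x)).card := by
        have h1 : ∀ x ∈ W, (N x).card = ∑ u ∈ U, (if u ∈ N x then 1 else 0) := by
          intro x hx
          have hNU : U.filter (fun u => u ∈ N x) = N x := by
            apply Finset.Subset.antisymm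
            · intro u hu; exact (Finset.mem_filter.mp hu).2
            · intro u hu; exact Finset.mem_filter.mpr ⟨(hN x (hWX hx)).1 hu, hu⟩
          conv_lhs => rw [← hNU]
          exact Finset.card_filter _ _
        rw [Finset.sum_congr rfl h1, Finset.sum_comm]
        exact Finset.sum_congr rfl (fun u _ => (Finset.card_filter _ _).symm)
      have hexists : ∃ u ∈ U, (R * W.card : ℕ) ≤ U.card * (W.filter (fun x => u ∈ N x)).card := by
        by_contra hcon
        push_neg at hcon
        have hlt : ∑ u ∈ U, U.card * (W.filter (fun x => u ∈ N x)).card <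
            ∑ _u ∈ U, R * W.card := by
          apply Finset.sum_lt_sum_of_nonempty (Finset.card_pos.mp hU0)
          exact fun u hu => hcon u hu
        rw [← Finset.mul_sum, ← hswap] at hlt
        have h2 : R * W.card * U.card ≤ U.card * (∑ x ∈ W, (N x).card) := by
          rw [mul_comm (U.card)]
          exact Nat.mul_le_mul_right _ hsum
        simp only [Finset.sum_const, smul_eq_mul] at hlt
        nlinarith [hlt, h2]
      obtain ⟨u, hu, huc⟩ := hexists
      refine ⟨insert u Y, Finset.insert_subset hu hYU, ?_, ?_⟩
      · exact le_trans (Finset.card_insert_le _ _) (by omega)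
      · have hsplit : X.filter (fun x => ∀ y ∈ insert u Y, y ∉ N x) =
            W.filter (fun x => u ∉ N x) := by
          ext x
          simp only [hW, Finset.mem_filter, Finset.mem_insert]
          constructor
          · rintro ⟨hx, hall⟩
            exact ⟨⟨hx, fun y hy => hall y (Or.inr hy)⟩, hall u (Or.inl rfl)⟩
          · rintro ⟨⟨hx, hall⟩, hu'⟩
            refine ⟨hx, fun y hy => ?_⟩
            rcases hy with rfl | hy
            · exact hu'
            · exact hall y hy
        rw [hsplit]
        have h3 : (W.filter (fun x => u ∈ N x)).card ≤ W.card :=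
          Finset.card_le_card (Finset.filter_subset _ _)
        have hcardsplit : (W.filter (fun x => u ∉ N x)).card =
            W.card - (W.filter (fun x => u ∈ N x)).card := by
          have := Finset.card_filter_add_card_filter_not (s := W)
            (p := fun x => u ∈ N x)
          omega
        have hfrac : (R : ℝ) / (U.card : ℝ) * (W.card : ℝ) ≤
            ((W.filter (fun x => u ∈ N x)).card : ℝ) := by
          rw [div_mul_eq_mul_div, div_le_iff₀ (by exact_mod_cast hU0)]
          calc (R : ℝ) * (W.card : ℝ) = ((R * W.card : ℕ) : ℝ) := by push_cast; ring
            _ ≤ ((U.card * (W.filter (fun x => u ∈ N x)).card : ℕ) : ℝ) := by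
                exact_mod_cast huc
            _ = _ := by push_cast; ring
        have hle : ((W.filter (fun x => u ∉ N x)).card : ℝ) ≤
            (W.card : ℝ) * (1 - (R : ℝ) / (U.card : ℝ)) := by
          rw [hcardsplit, Nat.cast_sub h3]
          have hexp : (W.card : ℝ) * (1 - (R : ℝ) / (U.card : ℝ)) =
              (W.card : ℝ) - (R : ℝ) / (U.card : ℝ) * (W.card : ℝ) := by ring
          rw [hexp]
          linarith [hfrac]
        calc ((W.filter (fun x => u ∉ N x)).card : ℝ)
            ≤ (W.card : ℝ) * (1 - (R : ℝ) / (U.card : ℝ)) := hle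
          _ ≤ ((X.card : ℝ) * (1 - (R : ℝ) / (U.card : ℝ)) ^ k) *
                (1 - (R : ℝ) / (U.card : ℝ)) := mul_le_mul_of_nonneg_right hYb hq0
          _ = (X.card : ℝ) * (1 - (R : ℝ) / (U.card : ℝ)) ^ (k+1) := by ring

lemma runs_cons_head (b : Bool) (t : List Bool) (ht : t ≠ []) :
    runs (b :: t) = runs t + (if t.head? = some b then 0 else 1) := by
  cases t with
  | nil => exact absurd rfl ht
  | cons c t' =>
    by_cases h : b = c
    · subst h; simp [runs]
    · have hcb : ¬ ((c :: t').head? = some b) := by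
        simp only [List.head?_cons, Option.some.injEq]
        exact fun hh => h hh.symm
      rw [if_neg hcb]
      simp only [runs, if_neg h]
      omega

lemma sum_choose_pascal (m : ℕ) : ∀ ρ',
    (∑ j ∈ Finset.range (ρ'+1), (m+1).choose j) =
      (∑ j ∈ Finset.range (ρ'+1), m.choose j) + (∑ j ∈ Finset.range ρ', m.choose j) := by
  intro ρ'
  induction ρ' with
  | zero => simp
  | succ ρ' ih =>
    rw [Finset.sum_range_succ ((m+1).choose ·) (ρ'+1), ih,
      Finset.sum_range_succ (m.choose ·) (ρ'+1), Finset.sum_range_succ (m.choose ·) ρ']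
    have hpascal : (m+1).choose (ρ'+1) = m.choose ρ' + m.choose (ρ'+1) :=
      Nat.choose_succ_succ' m ρ'
    omega

/-- Words of length `m+1`, with given head, and `runs < ρ`. -/
lemma cntLowH_le (m : ℕ) : ∀ (b : Bool) (ρ : ℕ),
    ((allWords (m+1)).filter (fun x => runs x < ρ ∧ x.head? = some b)).card ≤
      ∑ j ∈ Finset.range ρ, m.choose j := by
  induction m with
  | zero =>
    intro b ρ
    cases ρ with
    | zero =>
      have hemp : ((allWords 1).filter (fun x => runs x < 0 ∧ x.head? = some b)) = ∅ := by
        apply Finset.filter_false_of_mem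
        intro x hx
        simp
      simp [hemp]
    | succ ρ =>
      have h1 : ((allWords 1).filter (fun x => runs x < ρ+1 ∧ x.head? = some b)) ⊆ {[b]} := by
        intro x hx
        simp only [Finset.mem_filter, mem_allWords] at hx
        obtain ⟨hlen, -, hhead⟩ := hx
        cases x with
        | nil => simp at hlen
        | cons c t =>
          simp only [List.length_cons, Nat.add_eq_right, List.length_eq_zero_iff] at hlen
          subst hlen
          replace hhead : c = b := by simpa using hhead
          subst hhead
          simp
      calc _ ≤ ({[b]} : Finset (List Bool)).card := Finset.card_le_card h1
        _ = 1 := rfl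
        _ ≤ _ := by
          rw [Finset.sum_range_succ']
          simp
  | succ m ihm =>
    intro b ρ
    have himg : ((allWords (m+2)).filter (fun x => runs x < ρ ∧ x.head? = some b)) =
        ((allWords (m+1)).filter (fun t => (runs t < ρ ∧ t.head? = some b) ∨
          (runs t + 1 < ρ ∧ t.head? = some (!b)))).image (b :: ·) := by
      ext x
      simp only [Finset.mem_filter, Finset.mem_image, mem_allWords]
      constructor
      · rintro ⟨hlen, hruns, hhead⟩
        cases x with
        | nil => simp at hlen
        | cons c t =>
          replace hhead : c = b := by simpa using hhead
          subst hhead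
          have htne : t ≠ [] := by
            intro h; subst h; simp at hlen
          have hrx := runs_cons_head c t htne
          refine ⟨t, ⟨by simpa using hlen, ?_⟩, rfl⟩
          by_cases hth : t.head? = some c
          · left
            refine ⟨?_, hth⟩
            rw [hrx, if_pos hth] at hruns
            omega
          · right
            have hh2 : t.head? = some (!c) := by
              cases t with
              | nil => exact absurd rfl htne
              | cons d t' =>
                simp only [List.head?_cons, Option.some.injEq] at hth ⊢
                cases c <;> cases d <;> simp_all
            refine ⟨?_, hh2⟩
            rw [hrx, if_neg hth] at hruns
            omega
      · rintro ⟨t, ⟨hlen, hcond⟩, rfl⟩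
        have htne : t ≠ [] := by
          intro h; subst h; simp at hlen
        have hrx := runs_cons_head b t htne
        refine ⟨by simpa using hlen, ?_, by simp⟩
        rcases hcond with ⟨h1, h2⟩ | ⟨h1, h2⟩
        · rw [hrx, if_pos h2]; omega
        · have hne : ¬ (t.head? = some b) := by
            rw [h2]
            cases b <;> simp
          rw [hrx, if_neg hne]
          omega
    have hinj : Function.Injective (b :: · : List Bool → List Bool) :=
      fun u v h => by simpa using h
    rw [himg, Finset.card_image_of_injective _ hinj]
    have hsplit : ((allWords (m+1)).filter (fun t => (runs t < ρ ∧ t.head? = some b) ∨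
          (runs t + 1 < ρ ∧ t.head? = some (!b)))) ⊆
        ((allWords (m+1)).filter (fun t => runs t < ρ ∧ t.head? = some b)) ∪
        ((allWords (m+1)).filter (fun t => runs t < ρ - 1 ∧ t.head? = some (!b))) := by
      intro t ht
      simp only [Finset.mem_filter, Finset.mem_union] at ht ⊢
      rcases ht with ⟨h1, h2 | h3⟩
      · exact Or.inl ⟨h1, h2⟩
      · exact Or.inr ⟨h1, by omega, h3.2⟩
    calc _ ≤ _ := Finset.card_le_card hsplit
      _ ≤ ((allWords (m+1)).filter (fun t => runs t < ρ ∧ t.head? = some b)).card +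
          ((allWords (m+1)).filter (fun t => runs t < ρ - 1 ∧ t.head? = some (!b))).card :=
        Finset.card_union_le _ _
      _ ≤ (∑ j ∈ Finset.range ρ, m.choose j) + (∑ j ∈ Finset.range (ρ-1), m.choose j) := by
        have i1 := ihm b ρ
        have i2 := ihm (!b) (ρ-1)
        omega
      _ ≤ ∑ j ∈ Finset.range ρ, (m+1).choose j := by
        cases ρ with
        | zero => simp
        | succ ρ' =>
          rw [sum_choose_pascal m ρ']
          have hs : ρ' + 1 - 1 = ρ' := by omega
          rw [hs]

lemma low_words_card_le (L ρ : ℕ) (hL : 1 ≤ L) :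
    ((allWords L).filter (fun x => runs x < ρ)).card ≤
      2 * ∑ j ∈ Finset.range ρ, (L-1).choose j := by
  obtain ⟨m, rfl⟩ : ∃ m, L = m + 1 := ⟨L - 1, by omega⟩
  have hsub : ((allWords (m+1)).filter (fun x => runs x < ρ)) ⊆
      ((allWords (m+1)).filter (fun x => runs x < ρ ∧ x.head? = some true)) ∪
      ((allWords (m+1)).filter (fun x => runs x < ρ ∧ x.head? = some false)) := by
    intro x hx
    simp only [Finset.mem_filter, Finset.mem_union, mem_allWords] at hx ⊢
    cases x with
    | nil => simp at hx
    | cons c t =>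
      cases c
      · exact Or.inr ⟨hx.1, hx.2, rfl⟩
      · exact Or.inl ⟨hx.1, hx.2, rfl⟩
  have hstep := Finset.card_union_le
    ((allWords (m+1)).filter (fun x => runs x < ρ ∧ x.head? = some true))
    ((allWords (m+1)).filter (fun x => runs x < ρ ∧ x.head? = some false))
  have h1 := cntLowH_le m true ρ
  have h2 := cntLowH_le m false ρ
  have h3 := Finset.card_le_card hsub
  simp only [Nat.add_sub_cancel]
  omega

lemma covering_exists (L eps ρ R k : ℕ) (heps : eps ≤ L) (hL : 1 ≤ L) (hR : 0 < R)
    (hRle : ∀ x ∈ allWords L, ρ ≤ runs x →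
      R ≤ ((allWords (L - eps)).filter (fun u => u.Sublist x)).card)
    (hRU : R ≤ 2 ^ (L - eps)) :
    ∃ Y : Finset (List Bool), Y ⊆ allWords (L - eps) ∧
      (∀ x ∈ allWords L, ∃ y ∈ Y, y.Sublist x) ∧
      (Y.card : ℝ) ≤ k + (2:ℝ)^L * (1 - (R:ℝ)/((2:ℝ)^(L-eps)))^k
        + 2 * ∑ j ∈ Finset.range ρ, ((L-1).choose j : ℝ) := by
  classical
  set N : List Bool → Finset (List Bool) :=
    fun x => (allWords (L - eps)).filter (fun u => u.Sublist x) with hN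
  set Xhi : Finset (List Bool) := (allWords L).filter (fun x => ρ ≤ runs x) with hXhi
  have hNprop : ∀ x ∈ Xhi, N x ⊆ allWords (L - eps) ∧ R ≤ (N x).card := by
    intro x hx
    rw [hXhi, Finset.mem_filter] at hx
    exact ⟨Finset.filter_subset _ _, hRle x hx.1 hx.2⟩
  have hUcard : (allWords (L - eps)).card = 2 ^ (L - eps) := card_allWords _
  obtain ⟨Y₁, hY₁U, hY₁c, hY₁b⟩ := greedy_cover (allWords (L - eps)) Xhi N R hR hNprop
    (by rw [hUcard]; exact hRU) k
  set W : Finset (List Bool) := Xhi.filter (fun x => ∀ y ∈ Y₁, y ∉ N x) with hW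
  -- one pick per uncovered high word
  set pick : List Bool → List Bool :=
    fun x => if hx : ∃ y, y ∈ N x then hx.choose else [] with hpick
  have hpickmem : ∀ x ∈ W, pick x ∈ N x := by
    intro x hx
    have hxhi : x ∈ Xhi := Finset.filter_subset _ _ hx
    have hne : ∃ y, y ∈ N x := by
      have := (hNprop x hxhi).2
      have hpos : 0 < (N x).card := lt_of_lt_of_le hR this
      obtain ⟨y, hy⟩ := Finset.card_pos.mp hpos
      exact ⟨y, hy⟩
    rw [hpick]
    simp only [dif_pos hne]
    exact hne.choose_spec
  set low : Finset (List Bool) := (allWords L).filter (fun x => runs x < ρ) with hlow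
  set lowCover : Finset (List Bool) := low.image (fun x => x.take (L - eps)) with hlowCover
  have hlowmem : ∀ x ∈ low, x.take (L - eps) ∈ allWords (L - eps) ∧ (x.take (L - eps)).Sublist x := by
    intro x hx
    rw [hlow, Finset.mem_filter, mem_allWords] at hx
    refine ⟨?_, List.take_sublist _ _⟩
    rw [mem_allWords, List.length_take, hx.1]
    omega
  refine ⟨Y₁ ∪ W.image pick ∪ lowCover, ?_, ?_, ?_⟩
  · intro y hy
    simp only [Finset.mem_union] at hy
    rcases hy with (hy | hy) | hy
    · exact hY₁U hy
    · obtain ⟨x, hx, rfl⟩ := Finset.mem_image.mp hy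
      exact Finset.filter_subset _ _ (hpickmem x hx)
    · obtain ⟨x, hx, rfl⟩ := Finset.mem_image.mp hy
      exact (hlowmem x hx).1
  · intro x hx
    by_cases hxr : ρ ≤ runs x
    · have hxhi : x ∈ Xhi := by rw [hXhi, Finset.mem_filter]; exact ⟨hx, hxr⟩
      by_cases hcov : ∀ y ∈ Y₁, y ∉ N x
      · -- x uncovered by greedy: use pick
        have hxW : x ∈ W := by rw [hW, Finset.mem_filter]; exact ⟨hxhi, hcov⟩
        refine ⟨pick x, ?_, ?_⟩
        · simp only [Finset.mem_union]
          exact Or.inl (Or.inr (Finset.mem_image_of_mem _ hxW))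
        · have := hpickmem x hxW
          rw [hN] at this
          exact (Finset.mem_filter.mp this).2
      · push_neg at hcov
        obtain ⟨y, hy, hyN⟩ := hcov
        refine ⟨y, ?_, ?_⟩
        · simp only [Finset.mem_union]; exact Or.inl (Or.inl hy)
        · rw [hN] at hyN
          exact (Finset.mem_filter.mp hyN).2
    · push_neg at hxr
      have hxlow : x ∈ low := by rw [hlow, Finset.mem_filter]; exact ⟨hx, hxr⟩
      refine ⟨x.take (L - eps), ?_, (hlowmem x hxlow).2⟩
      simp only [Finset.mem_union]
      exact Or.inr (Finset.mem_image_of_mem _ hxlow)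
  · -- cardinality bound
    have hc1 : (Y₁ ∪ W.image pick ∪ lowCover).card ≤ Y₁.card + W.card + low.card := by
      calc (Y₁ ∪ W.image pick ∪ lowCover).card
          ≤ (Y₁ ∪ W.image pick).card + lowCover.card := Finset.card_union_le _ _
        _ ≤ Y₁.card + (W.image pick).card + lowCover.card := by
            have := Finset.card_union_le Y₁ (W.image pick)
            omega
        _ ≤ Y₁.card + W.card + low.card := by
            have h1 := Finset.card_image_le (s := W) (f := pick)
            have h2 := Finset.card_image_le (s := low) (f := fun x => x.take (L - eps))
            rw [hlowCover]
            omega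
    have hWb : ((W.card : ℝ)) ≤ (2:ℝ)^L * (1 - (R:ℝ)/((2:ℝ)^(L-eps)))^k := by
      have hXcard : (Xhi.card : ℝ) ≤ (2:ℝ)^L := by
        have := Finset.card_le_card (Finset.filter_subset (fun x => ρ ≤ runs x) (allWords L))
        rw [card_allWords] at this
        exact_mod_cast this
      have hq0 : (0:ℝ) ≤ 1 - (R:ℝ)/((2:ℝ)^(L-eps)) := by
        rw [sub_nonneg, div_le_one (by positivity)]
        exact_mod_cast hRU
      calc ((W.card : ℝ)) ≤ (Xhi.card : ℝ) * (1 - (R:ℝ)/((2:ℝ)^(L-eps)))^k := by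
            have := hY₁b
            rw [hUcard] at this
            convert this using 3 <;> push_cast <;> ring
        _ ≤ (2:ℝ)^L * (1 - (R:ℝ)/((2:ℝ)^(L-eps)))^k :=
            mul_le_mul_of_nonneg_right hXcard (pow_nonneg hq0 k)
    have hlowb : ((low.card : ℝ)) ≤ 2 * ∑ j ∈ Finset.range ρ, ((L-1).choose j : ℝ) := by
      have := low_words_card_le L ρ hL
      rw [← hlow] at this
      calc ((low.card : ℝ)) ≤ ((2 * ∑ j ∈ Finset.range ρ, (L-1).choose j : ℕ) : ℝ) := by
            exact_mod_cast this
        _ = 2 * ∑ j ∈ Finset.range ρ, ((L-1).choose j : ℝ) := by push_cast; ring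
    calc ((Y₁ ∪ W.image pick ∪ lowCover).card : ℝ)
        ≤ ((Y₁.card + W.card + low.card : ℕ) : ℝ) := by exact_mod_cast hc1
      _ = (Y₁.card : ℝ) + (W.card : ℝ) + (low.card : ℝ) := by push_cast; ring
      _ ≤ (k : ℝ) + ((2:ℝ)^L * (1 - (R:ℝ)/((2:ℝ)^(L-eps)))^k)
          + 2 * ∑ j ∈ Finset.range ρ, ((L-1).choose j : ℝ) := by
          have : (Y₁.card : ℝ) ≤ (k : ℝ) := by exact_mod_cast hY₁c
          gcongr

lemma choose_mono_below_half {n a : ℕ} : ∀ {b}, a ≤ b → 2 * b ≤ n →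
    n.choose a ≤ n.choose b := by
  intro b
  induction b with
  | zero =>
    intro h1 _
    have ha : a = 0 := by omega
    subst ha
    exact le_refl _
  | succ m ih =>
    intro h1 h2
    rcases Nat.lt_or_ge a (m+1) with h | h
    · exact le_trans (ih (by omega) (by omega))
        (Nat.choose_le_succ_of_lt_half_left (by omega))
    · have ha : a = m + 1 := by omega
      subst ha
      exact le_refl _

lemma code_card_le (L eps M : ℕ) (heps : eps ≤ L) (hM : 1 ≤ M)
    (Y : Finset (List Bool)) (hY : Y ⊆ allWords (L - eps))
    (hcov : ∀ x ∈ allWords L, ∃ y ∈ Y, y.Sublist x)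
    (C : Finset (Finset (List Bool)))
    (hC : ∀ S ∈ C, S.card = M ∧ ∀ x ∈ S, x.length = L)
    (hcode : isLevCode 0 M eps ↑C) :
    C.card ≤ (M + 1) * (Y.card + 2 * M).choose M := by
  classical
  set cov : List Bool → List Bool :=
    fun x => if hx : ∃ y, y ∈ Y ∧ y.Sublist x then hx.choose else [] with hcovdef
  have hcova : ∀ x ∈ allWords L, cov x ∈ Y ∧ (cov x).Sublist x := by
    intro x hx
    obtain ⟨y, hy1, hy2⟩ := hcov x hx
    have hex : ∃ y, y ∈ Y ∧ y.Sublist x := ⟨y, hy1, hy2⟩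
    rw [hcovdef]
    simp only [dif_pos hex]
    exact hex.choose_spec
  set Φ : Finset (List Bool) → Finset (List Bool) := fun S => S.image cov with hΦ
  have hball : ∀ S ∈ C, Φ S ∈ levBall 0 M eps S := by
    intro S hS
    obtain ⟨hcard, hlen⟩ := hC S hS
    refine ⟨∅, ∅, S, cov, Finset.disjoint_empty_left _, Finset.disjoint_empty_left _,
      Finset.disjoint_empty_left _, by simp, by simp, le_of_eq hcard, ?_, by simp [hΦ]⟩
    intro x hxS
    have hx : x ∈ allWords L := mem_allWords.mpr (hlen x hxS)
    obtain ⟨hYmem, hsub⟩ := hcova x hx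
    refine ⟨cov x, hsub, List.Sublist.refl _, ?_⟩
    have hylen : (cov x).length = L - eps := mem_allWords.mp (hY hYmem)
    have hxlen := hlen x hxS
    rw [hylen, hxlen]
    omega
  have hinj : Set.InjOn Φ ↑C := by
    intro S₁ h₁ S₂ h₂ hEq
    by_contra hne
    have hdis := hcode S₁ h₁ S₂ h₂ hne
    have hmem : Φ S₁ ∈ levBall 0 M eps S₁ ∩ levBall 0 M eps S₂ :=
      ⟨hball S₁ h₁, hEq ▸ hball S₂ h₂⟩
    rw [hdis] at hmem
    exact hmem
  have hcardeq : C.card = (C.image Φ).card := (Finset.card_image_of_injOn hinj).symm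
  have hsubset : C.image Φ ⊆ (Finset.range (M+1)).biUnion (fun j => Y.powersetCard j) := by
    intro A hA
    obtain ⟨S, hS, rfl⟩ := Finset.mem_image.mp hA
    obtain ⟨hcard, hlen⟩ := hC S hS
    have hsub : Φ S ⊆ Y := by
      intro y hy
      obtain ⟨x, hxS, rfl⟩ := Finset.mem_image.mp hy
      exact (hcova x (mem_allWords.mpr (hlen x hxS))).1
    have hcle : (Φ S).card ≤ M := by
      calc (Φ S).card ≤ S.card := Finset.card_image_le
        _ = M := hcard
    rw [Finset.mem_biUnion]
    exact ⟨(Φ S).card, Finset.mem_range.mpr (by omega),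
      Finset.mem_powersetCard.mpr ⟨hsub, rfl⟩⟩
  calc C.card = (C.image Φ).card := hcardeq
    _ ≤ ((Finset.range (M+1)).biUnion (fun j => Y.powersetCard j)).card :=
        Finset.card_le_card hsubset
    _ ≤ ∑ j ∈ Finset.range (M+1), (Y.powersetCard j).card := Finset.card_biUnion_le
    _ = ∑ j ∈ Finset.range (M+1), Y.card.choose j := by
        exact Finset.sum_congr rfl (fun j _ => Finset.card_powersetCard j Y)
    _ ≤ ∑ _j ∈ Finset.range (M+1), (Y.card + 2 * M).choose M := by
        apply Finset.sum_le_sum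
        intro j hj
        have hjM : j ≤ M := by
          have := Finset.mem_range.mp hj; omega
        calc Y.card.choose j ≤ (Y.card + 2 * M).choose j :=
              Nat.choose_le_choose j (by omega)
          _ ≤ (Y.card + 2 * M).choose M := choose_mono_below_half hjM (by omega)
    _ = (M + 1) * (Y.card + 2 * M).choose M := by
        rw [Finset.sum_const, Finset.card_range, smul_eq_mul]

/-- Run-count threshold parameter. -/
def covh (L : ℕ) : ℕ := L / (Nat.log 2 L + 1)^2
/-- Neighborhood-size parameter. -/
def covR (eps L : ℕ) : ℕ := (covh L).choose eps
/-- Greedy stopping-time exponent. -/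
def covT (eps L : ℕ) : ℕ := Nat.log 2 (covR eps L * L^2) + 1
/-- Greedy step count. -/
noncomputable def covk (eps L : ℕ) : ℕ :=
  ⌈((2:ℝ)^(L-eps) * (covT eps L)) / (covR eps L)⌉₊

lemma good_cover (eps L : ℕ) (hepsL : eps ≤ L) (hL : 1 ≤ L)
    (HRpos : 0 < covR eps L) (HRU : covR eps L ≤ 2^(L - eps))
    (Hlow : 2*(2*covh L : ℝ)*(L:ℝ)^(2*covh L) ≤ (2:ℝ)^L / (covR eps L)) :
    ∃ Y : Finset (List Bool), Y ⊆ allWords (L - eps) ∧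
      (∀ x ∈ allWords L, ∃ y ∈ Y, y.Sublist x) ∧
      (Y.card : ℝ) ≤ ((2:ℝ)^L / (covR eps L)) * ((covT eps L : ℝ) + 3) := by
  have hRle : ∀ x ∈ allWords L, 2*covh L ≤ runs x →
      covR eps L ≤ ((allWords (L-eps)).filter (fun u => u.Sublist x)).card := by
    intro x hx hr
    have hxlen : x.length = L := mem_allWords.mp hx
    have h1 : covh L ≤ runs x / 2 := by omega
    calc covR eps L = (covh L).choose eps := rfl
      _ ≤ (runs x / 2).choose eps := Nat.choose_le_choose eps h1
      _ ≤ subCount eps x := choose_runs_le_subCount x.length x rfl eps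
      _ = ((allWords (x.length - eps)).filter (fun u => u.Sublist x)).card :=
          (subCount_eq_filter_card eps x (by omega)).symm
      _ = ((allWords (L - eps)).filter (fun u => u.Sublist x)).card := by rw [hxlen]
  obtain ⟨Y, hYsub, hYcov, hYb⟩ :=
    covering_exists L eps (2*covh L) (covR eps L) (covk eps L) hepsL hL HRpos hRle HRU
  refine ⟨Y, hYsub, hYcov, ?_⟩
  have hR0 : (0:ℝ) < (covR eps L : ℝ) := by exact_mod_cast HRpos
  have hRU' : (covR eps L : ℝ) ≤ (2:ℝ)^(L-eps) := by exact_mod_cast HRU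
  have hRU2 : (covR eps L : ℝ) ≤ (2:ℝ)^L :=
    le_trans hRU' (pow_le_pow_right₀ (by norm_num) (by omega))
  have hpowpos : (0:ℝ) < (2:ℝ)^(L-eps) := by positivity
  have hT0 : (0:ℝ) ≤ (covT eps L : ℝ) := by positivity
  have h1R : (1:ℝ) ≤ (2:ℝ)^L / (covR eps L) := by
    rw [le_div_iff₀ hR0]; linarith
  -- bound on the number of greedy steps
  have hk1 : (covk eps L : ℝ) ≤ (2:ℝ)^L * (covT eps L) / (covR eps L) + 1 := by
    have h1 : (covk eps L : ℝ) < ((2:ℝ)^(L-eps) * (covT eps L)) / (covR eps L) + 1 :=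
      Nat.ceil_lt_add_one (by positivity)
    have h2 : ((2:ℝ)^(L-eps) * (covT eps L)) / (covR eps L) ≤
        (2:ℝ)^L * (covT eps L) / (covR eps L) := by
      gcongr
      · norm_num
      · omega
    linarith
  -- bound on the residual term
  have hmid : (2:ℝ)^L * (1 - (covR eps L : ℝ)/(2:ℝ)^(L-eps))^(covk eps L) ≤
      (2:ℝ)^L / (covR eps L) := by
    set q : ℝ := (covR eps L : ℝ) / (2:ℝ)^(L-eps) with hq
    have hq0 : 0 ≤ 1 - q := by
      rw [sub_nonneg, hq, div_le_one hpowpos]; exact hRU'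
    have hqnn : 0 ≤ q := by rw [hq]; positivity
    have hqe : 1 - q ≤ Real.exp (-q) := by linarith [Real.add_one_le_exp (-q)]
    have hp1 : (1-q)^(covk eps L) ≤ Real.exp (-q) ^ (covk eps L) :=
      pow_le_pow_left₀ hq0 hqe _
    have hp2 : Real.exp (-q) ^ (covk eps L) = Real.exp (-(q * (covk eps L))) := by
      rw [← Real.exp_nat_mul]; ring_nf
    have hqk : (covT eps L : ℝ) ≤ q * (covk eps L) := by
      have hceil : ((2:ℝ)^(L-eps) * (covT eps L)) / (covR eps L) ≤ (covk eps L : ℝ) :=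
        Nat.le_ceil _
      have hqT : q * (((2:ℝ)^(L-eps) * (covT eps L)) / (covR eps L)) = (covT eps L : ℝ) := by
        rw [hq]; field_simp
      calc (covT eps L : ℝ) = q * (((2:ℝ)^(L-eps) * (covT eps L)) / (covR eps L)) := hqT.symm
        _ ≤ q * (covk eps L) := mul_le_mul_of_nonneg_left hceil hqnn
    have hexp2 : Real.exp (-(q * (covk eps L))) ≤ Real.exp (-(covT eps L : ℝ)) :=
      Real.exp_le_exp.mpr (by linarith)
    have hexpT : Real.exp (-(covT eps L : ℝ)) ≤ 1 / ((covR eps L : ℝ) * (L:ℝ)^2) := by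
      have h2T : (covR eps L * L^2 : ℕ) < 2 ^ (covT eps L) :=
        Nat.lt_pow_succ_log_self (by norm_num) _
      have h2T' : (covR eps L : ℝ) * (L:ℝ)^2 ≤ (2:ℝ)^(covT eps L) := by
        have hcast : ((covR eps L * L^2 : ℕ) : ℝ) ≤ ((2^(covT eps L) : ℕ) : ℝ) := by
          exact_mod_cast le_of_lt h2T
        push_cast at hcast
        linarith
      have hexppow : (2:ℝ)^(covT eps L) ≤ Real.exp (covT eps L) := by
        have h2e : (2:ℝ) ≤ Real.exp 1 := by linarith [Real.add_one_le_exp 1]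
        calc (2:ℝ)^(covT eps L) ≤ (Real.exp 1)^(covT eps L) :=
              pow_le_pow_left₀ (by norm_num) h2e _
          _ = Real.exp (covT eps L) := by rw [← Real.exp_nat_mul]; ring_nf
      rw [Real.exp_neg, one_div]
      apply inv_anti₀ (by positivity)
      exact le_trans h2T' hexppow
    have hL2 : (1:ℝ) ≤ (L:ℝ)^2 := by
      have h1' : (1:ℝ) ≤ (L:ℝ) := by exact_mod_cast hL
      nlinarith
    calc (2:ℝ)^L * (1-q)^(covk eps L)
        ≤ (2:ℝ)^L * (1/((covR eps L : ℝ)*(L:ℝ)^2)) := by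
          apply mul_le_mul_of_nonneg_left _ (by positivity)
          exact le_trans hp1 (by rw [hp2]; exact le_trans hexp2 hexpT)
      _ ≤ (2:ℝ)^L / (covR eps L) := by
          rw [mul_one_div]
          gcongr
          nlinarith
  -- bound on the low-run cover
  have hlowsum : (2 * ∑ j ∈ Finset.range (2*covh L), ((L-1).choose j : ℝ)) ≤
      2*(2*covh L : ℝ)*(L:ℝ)^(2*covh L) := by
    have hnat : ∑ j ∈ Finset.range (2*covh L), (L-1).choose j ≤
        (2*covh L) * L^(2*covh L) := by
      calc ∑ j ∈ Finset.range (2*covh L), (L-1).choose j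
          ≤ ∑ _j ∈ Finset.range (2*covh L), L^(2*covh L) := by
            apply Finset.sum_le_sum
            intro j hj
            calc (L-1).choose j ≤ (L-1)^j := Nat.choose_le_pow _ _
              _ ≤ L^j := Nat.pow_le_pow_left (by omega) _
              _ ≤ L^(2*covh L) := Nat.pow_le_pow_right (by omega)
                  (le_of_lt (Finset.mem_range.mp hj))
        _ = (2*covh L) * L^(2*covh L) := by
            rw [Finset.sum_const, Finset.card_range, smul_eq_mul]
    calc (2 * ∑ j ∈ Finset.range (2*covh L), ((L-1).choose j : ℝ))
        = ((2 * ∑ j ∈ Finset.range (2*covh L), (L-1).choose j : ℕ) : ℝ) := by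
          push_cast; ring
      _ ≤ ((2 * ((2*covh L) * L^(2*covh L)) : ℕ) : ℝ) := by
          exact_mod_cast Nat.mul_le_mul_left 2 hnat
      _ = 2*(2*covh L : ℝ)*(L:ℝ)^(2*covh L) := by push_cast; ring
  calc (Y.card : ℝ)
      ≤ (covk eps L) + (2:ℝ)^L * (1 - (covR eps L : ℝ)/((2:ℝ)^(L-eps)))^(covk eps L)
        + 2 * ∑ j ∈ Finset.range (2*covh L), ((L-1).choose j : ℝ) := hYb
    _ ≤ ((2:ℝ)^L * (covT eps L) / (covR eps L) + 1) + (2:ℝ)^L / (covR eps L)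
        + (2:ℝ)^L / (covR eps L) := by
        have := le_trans hlowsum Hlow
        linarith
    _ ≤ ((2:ℝ)^L / (covR eps L)) * ((covT eps L : ℝ) + 3) := by
        have hTR : (2:ℝ)^L * (covT eps L) / (covR eps L) =
            ((2:ℝ)^L / (covR eps L)) * (covT eps L) := by ring
        rw [hTR]
        linarith

lemma main_estimate (eps L M : ℕ) (c : ℝ) (hc0 : 0 ≤ c)
    (hepsL : eps ≤ L) (hL : 1 ≤ L) (hM : 1 ≤ M)
    (HMhalf : M ≤ 2^(L-1))
    (HRpos : 0 < covR eps L)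
    (HRU : covR eps L ≤ 2^(L - eps))
    (Hlow : 2*(2*covh L : ℝ)*(L:ℝ)^(2*covh L) ≤ (2:ℝ)^L / (covR eps L))
    (H2M : (2*M : ℝ) ≤ (2:ℝ)^L / (covR eps L))
    (Hfinal : c * Real.logb 2 (∑ i ∈ Finset.range (eps+1), ((L+eps).choose i : ℝ)) ≤
      Real.logb 2 (covR eps L) - Real.logb 2 ((covT eps L : ℝ)+4) - 2)
    (C : Finset (Finset (List Bool)))
    (hC : ∀ S ∈ C, S.card = M ∧ ∀ x ∈ S, x.length = L)
    (hcode : isLevCode 0 M eps ↑C) (hne : C.Nonempty) :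
    c * M * (Real.logb 2 (∑ i ∈ Finset.range (eps+1), ((L+eps).choose i : ℝ)) - eps) ≤
      Real.logb 2 ((2^L).choose M) - Real.logb 2 C.card := by
  obtain ⟨Y, hYsub, hYcov, hYb⟩ := good_cover eps L hepsL hL HRpos HRU Hlow
  have hcount := code_card_le L eps M hepsL hM Y hYsub hYcov C hC hcode
  set P2 : ℕ := Y.card + 2*M with hP2def
  set R : ℝ := (covR eps L : ℝ) with hRdef
  set T : ℝ := (covT eps L : ℝ) with hTdef
  have hR0 : (0:ℝ) < R := by rw [hRdef]; exact_mod_cast HRpos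
  have hT0 : (0:ℝ) ≤ T := by rw [hTdef]; positivity
  have hP2b : (P2 : ℝ) ≤ ((2:ℝ)^L / R) * (T + 4) := by
    have : (P2 : ℝ) = (Y.card : ℝ) + (2*M : ℝ) := by rw [hP2def]; push_cast; ring
    rw [this]
    calc (Y.card : ℝ) + (2*M : ℝ) ≤ ((2:ℝ)^L / R) * (T + 3) + (2:ℝ)^L / R := by
          have := hYb; have := H2M
          rw [hRdef, hTdef]
          linarith
      _ = ((2:ℝ)^L / R) * (T + 4) := by ring
  -- positivity facts
  have hCpos : (0:ℝ) < (C.card : ℝ) := by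
    exact_mod_cast Finset.card_pos.mpr hne
  have hMP2 : M ≤ P2 := by omega
  have hchoosepos : 0 < P2.choose M := Nat.choose_pos hMP2
  have hP2pos : (0:ℝ) < (P2 : ℝ) := by
    have : 1 ≤ P2 := by omega
    exact_mod_cast this
  have hfacpos : (0:ℝ) < (Nat.factorial M : ℝ) := by exact_mod_cast Nat.factorial_pos M
  have hM2L : M ≤ 2^L := le_trans HMhalf (Nat.pow_le_pow_right (by norm_num) (by omega))
  have hbigpos : 0 < (2^L : ℕ) + 1 - M := by omega
  -- (a) logb C.card ≤ logb (M+1) + logb (P2.choose M)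
  have ha : Real.logb 2 C.card ≤ Real.logb 2 (M+1) + Real.logb 2 (P2.choose M) := by
    have h1 : (C.card : ℝ) ≤ ((M+1) * P2.choose M : ℕ) := by exact_mod_cast hcount
    have h2 : Real.logb 2 C.card ≤ Real.logb 2 (((M+1) * P2.choose M : ℕ) : ℝ) := by
      apply (Real.logb_le_logb (by norm_num) hCpos ?_).mpr h1
      · have : 0 < (M+1) * P2.choose M := by positivity
        exact_mod_cast this
    calc Real.logb 2 C.card ≤ Real.logb 2 (((M+1) * P2.choose M : ℕ) : ℝ) := h2
      _ = Real.logb 2 ((M+1 : ℝ) * (P2.choose M : ℝ)) := by push_cast; ring_nf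
      _ = Real.logb 2 (M+1) + Real.logb 2 (P2.choose M) := by
          rw [Real.logb_mul (by positivity) (Nat.cast_ne_zero.mpr hchoosepos.ne')]
  -- (b) logb (P2.choose M) ≤ M * logb P2 - logb M!
  have hcposR : (0:ℝ) < (P2.choose M : ℝ) := by exact_mod_cast hchoosepos
  have hb : Real.logb 2 (P2.choose M) ≤ M * Real.logb 2 (P2 : ℝ) - Real.logb 2 (Nat.factorial M) := by
    have h1 : (P2.choose M : ℝ) ≤ (P2 : ℝ)^M / (Nat.factorial M : ℝ) :=
      Nat.choose_le_pow_div (α := ℝ) M P2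
    have h2 : Real.logb 2 (P2.choose M) ≤
        Real.logb 2 ((P2 : ℝ)^M / (Nat.factorial M : ℝ)) := by
      apply (Real.logb_le_logb (by norm_num) hcposR (by positivity)).mpr h1
    calc Real.logb 2 (P2.choose M) ≤ Real.logb 2 ((P2 : ℝ)^M / (Nat.factorial M : ℝ)) := h2
      _ = Real.logb 2 ((P2 : ℝ)^M) - Real.logb 2 (Nat.factorial M) :=
          Real.logb_div (by positivity) hfacpos.ne'
      _ = M * Real.logb 2 (P2 : ℝ) - Real.logb 2 (Nat.factorial M) := by
          rw [Real.logb_pow]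
  -- (c) M * logb (2^L+1-M) - logb M! ≤ logb ((2^L).choose M)
  have hc : (M : ℝ) * Real.logb 2 (((2^L + 1 - M : ℕ)) : ℝ) - Real.logb 2 (Nat.factorial M) ≤
      Real.logb 2 ((2^L).choose M) := by
    have hcc : 0 < (2^L).choose M := Nat.choose_pos hM2L
    have h1 : (((2^L + 1 - M : ℕ) : ℝ))^M / (Nat.factorial M : ℝ) ≤ ((2^L).choose M : ℝ) :=
      Nat.pow_le_choose (α := ℝ) M (2^L)
    have hbpos : (0:ℝ) < (((2^L + 1 - M : ℕ)) : ℝ) := by exact_mod_cast hbigpos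
    have h2 : Real.logb 2 ((((2^L + 1 - M : ℕ) : ℝ))^M / (Nat.factorial M : ℝ)) ≤
        Real.logb 2 ((2^L).choose M) := by
      apply (Real.logb_le_logb (by norm_num) (by positivity) (by exact_mod_cast hcc)).mpr h1
    have h3 : (M : ℝ) * Real.logb 2 (((2^L + 1 - M : ℕ)) : ℝ) - Real.logb 2 (Nat.factorial M)
        = Real.logb 2 ((((2^L + 1 - M : ℕ) : ℝ))^M / (Nat.factorial M : ℝ)) := by
      rw [Real.logb_div (by positivity) hfacpos.ne', Real.logb_pow]
    rw [h3]
    exact h2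
  -- (d) L - 1 ≤ logb (2^L+1-M)
  have hd : (L : ℝ) - 1 ≤ Real.logb 2 (((2^L + 1 - M : ℕ)) : ℝ) := by
    have hpow : 2^(L-1) * 2 = 2^L := by
      rw [← pow_succ]
      congr 1
      omega
    have hge : 2^(L-1) ≤ (2^L + 1 - M : ℕ) := by omega
    have h1 : Real.logb 2 (((2^(L-1) : ℕ)) : ℝ) ≤ Real.logb 2 (((2^L + 1 - M : ℕ)) : ℝ) := by
      apply (Real.logb_le_logb (by norm_num) (by positivity) (by exact_mod_cast hbigpos)).mpr
      exact_mod_cast hge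
    have h2 : Real.logb 2 (((2^(L-1) : ℕ)) : ℝ) = ((L - 1 : ℕ) : ℝ) := by
      push_cast
      rw [Real.logb_pow, Real.logb_self_eq_one (by norm_num)]
      ring
    have h3 : ((L - 1 : ℕ) : ℝ) = (L : ℝ) - 1 := by
      have : 1 ≤ L := hL
      push_cast [Nat.cast_sub this]
      ring
    rw [h2, h3] at h1
    exact h1
  -- (e) logb (M+1) ≤ M
  have he : Real.logb 2 ((M : ℝ)+1) ≤ (M : ℝ) := by
    have h1 : ((M : ℝ)+1) ≤ (2:ℝ)^M := by
      have := Nat.lt_two_pow_self (n := M)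
      have h2 : (M+1 : ℕ) ≤ 2^M := this
      calc ((M : ℝ)+1) = ((M + 1 : ℕ) : ℝ) := by push_cast; ring
        _ ≤ ((2^M : ℕ) : ℝ) := by exact_mod_cast h2
        _ = (2:ℝ)^M := by push_cast; ring
    calc Real.logb 2 ((M : ℝ)+1) ≤ Real.logb 2 ((2:ℝ)^M) := by
          apply (Real.logb_le_logb (by norm_num) (by positivity) (by positivity)).mpr h1
      _ = M := by rw [Real.logb_pow, Real.logb_self_eq_one (by norm_num)]; ring
  -- (f) logb P2 ≤ L + logb (T+4) - logb R
  have hf : Real.logb 2 (P2 : ℝ) ≤ (L : ℝ) + Real.logb 2 (T+4) - Real.logb 2 R := by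
    have hT4 : (0:ℝ) < T + 4 := by linarith
    have h1 : Real.logb 2 (P2 : ℝ) ≤ Real.logb 2 ((2:ℝ)^L / R * (T+4)) := by
      apply (Real.logb_le_logb (by norm_num) hP2pos (by positivity)).mpr hP2b
    calc Real.logb 2 (P2 : ℝ) ≤ Real.logb 2 ((2:ℝ)^L / R * (T+4)) := h1
      _ = Real.logb 2 ((2:ℝ)^L / R) + Real.logb 2 (T+4) := by
          rw [Real.logb_mul (by positivity) hT4.ne']
      _ = Real.logb 2 ((2:ℝ)^L) - Real.logb 2 R + Real.logb 2 (T+4) := by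
          rw [Real.logb_div (by positivity) hR0.ne']
      _ = (L : ℝ) - Real.logb 2 R + Real.logb 2 (T+4) := by
          rw [Real.logb_pow, Real.logb_self_eq_one (by norm_num)]
          ring
      _ = (L : ℝ) + Real.logb 2 (T+4) - Real.logb 2 R := by ring
  -- assemble
  set D : ℝ := ∑ i ∈ Finset.range (eps+1), ((L+eps).choose i : ℝ) with hDdef
  have hMnn : (0:ℝ) ≤ (M : ℝ) := by positivity
  have hsupply : (M : ℝ) * (Real.logb 2 R - Real.logb 2 (T+4) - 2) ≤
      Real.logb 2 ((2^L).choose M) - Real.logb 2 C.card := by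
    have h1 : (M : ℝ) * ((L:ℝ) - 1) ≤ (M : ℝ) * Real.logb 2 (((2^L + 1 - M : ℕ)) : ℝ) :=
      mul_le_mul_of_nonneg_left hd hMnn
    have h2 : (M : ℝ) * Real.logb 2 (P2 : ℝ) ≤
        (M : ℝ) * ((L : ℝ) + Real.logb 2 (T+4) - Real.logb 2 R) :=
      mul_le_mul_of_nonneg_left hf hMnn
    have hma : Real.logb 2 ((M:ℝ)+1) = Real.logb 2 (((M:ℕ):ℝ)+1) := rfl
    linarith [ha, hb, hc, he, h1, h2]
  have htarget : c * M * (Real.logb 2 D - eps) ≤ (M : ℝ) * (c * Real.logb 2 D) := by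
    have h1 : c * M * (Real.logb 2 D - eps) = M * (c * Real.logb 2 D) - c * M * eps := by ring
    have h2 : (0:ℝ) ≤ c * M * eps := by positivity
    linarith
  have hmid2 : (M : ℝ) * (c * Real.logb 2 D) ≤
      (M : ℝ) * (Real.logb 2 R - Real.logb 2 (T+4) - 2) := by
    apply mul_le_mul_of_nonneg_left _ hMnn
    rw [hDdef, hRdef, hTdef]
    exact Hfinal
  linarith [htarget, hmid2, hsupply]

/-! ### Asymptotic helpers -/

lemma sqrt_helper (a b k : ℝ) (ha : 0 < a) :
    ∃ v₀ : ℝ, ∀ v : ℝ, v₀ ≤ v → b * Real.sqrt v + k ≤ a * v := by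
  refine ⟨max 1 (((|b| + |k|)/a + 1)^2), ?_⟩
  intro v hv
  have hv1 : (1:ℝ) ≤ v := le_trans (le_max_left _ _) hv
  have hv0 : (0:ℝ) ≤ v := by linarith
  have hs0 : 0 ≤ Real.sqrt v := Real.sqrt_nonneg v
  have hs1 : 1 ≤ Real.sqrt v := by
    rw [show (1:ℝ) = Real.sqrt 1 by simp]
    exact Real.sqrt_le_sqrt hv1
  have hsq : Real.sqrt v ^ 2 = v := Real.sq_sqrt hv0
  have habk : (0:ℝ) ≤ (|b| + |k|)/a + 1 := by positivity
  have hs2 : (|b| + |k|)/a + 1 ≤ Real.sqrt v := by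
    calc (|b| + |k|)/a + 1 = Real.sqrt (((|b| + |k|)/a + 1)^2) := (Real.sqrt_sq habk).symm
      _ ≤ Real.sqrt v := Real.sqrt_le_sqrt (le_trans (le_max_right _ _) hv)
  set s := Real.sqrt v with hsdef
  have h1 : b * s ≤ |b| * s := mul_le_mul_of_nonneg_right (le_abs_self b) hs0
  have h2 : k ≤ |k| * s := by
    calc k ≤ |k| := le_abs_self k
      _ = |k| * 1 := by ring
      _ ≤ |k| * s := mul_le_mul_of_nonneg_left hs1 (abs_nonneg k)
  have h4 : a * s * ((|b| + |k|)/a + 1) ≤ a * s * s :=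
    mul_le_mul_of_nonneg_left hs2 (by positivity)
  have heq : a * s * ((|b| + |k|)/a + 1) = (|b| + |k|) * s + a * s := by
    field_simp
  have h5 : (0:ℝ) ≤ a * s := by positivity
  have hss : s * s = v := by nlinarith [hsq]
  nlinarith [h1, h2, h4, heq, h5, hss]

lemma log_le_two_sqrt {v : ℝ} (hv : 1 ≤ v) : Real.log v ≤ 2 * Real.sqrt v := by
  have hv0 : (0:ℝ) ≤ v := by linarith
  have hs0 : 0 < Real.sqrt v := Real.sqrt_pos.mpr (by linarith)
  have h1 : Real.log (Real.sqrt v) ≤ Real.sqrt v - 1 := Real.log_le_sub_one_of_pos hs0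
  have h2 : Real.log v = 2 * Real.log (Real.sqrt v) := by
    rw [Real.log_sqrt hv0]; ring
  linarith

lemma logb_le_four_sqrt {v : ℝ} (hv : 1 ≤ v) : Real.logb 2 v ≤ 4 * Real.sqrt v := by
  have h1 : Real.log v ≤ 2 * Real.sqrt v := log_le_two_sqrt hv
  have hlog2 : (1:ℝ)/2 ≤ Real.log 2 := by
    have := Real.log_two_gt_d9
    linarith
  have hlogv : 0 ≤ Real.log v := Real.log_nonneg hv
  rw [Real.logb, div_le_iff₀ (by linarith : (0:ℝ) < Real.log 2)]
  nlinarith [Real.sqrt_nonneg v]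

lemma logb_lin (γ A B : ℝ) (hγ : 0 < γ) :
    ∃ v₀ : ℝ, ∀ v : ℝ, v₀ ≤ v → A * Real.logb 2 v + B ≤ γ * v := by
  obtain ⟨w₀, hw⟩ := sqrt_helper γ (4 * |A|) B hγ
  refine ⟨max 1 w₀, ?_⟩
  intro v hv
  have hv1 : (1:ℝ) ≤ v := le_trans (le_max_left _ _) hv
  have h1 : Real.logb 2 v ≤ 4 * Real.sqrt v := logb_le_four_sqrt hv1
  have h2 : 0 ≤ Real.logb 2 v := Real.logb_nonneg (by norm_num) hv1
  have h3 : A * Real.logb 2 v ≤ |A| * (4 * Real.sqrt v) := by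
    calc A * Real.logb 2 v ≤ |A| * Real.logb 2 v :=
          mul_le_mul_of_nonneg_right (le_abs_self A) h2
      _ ≤ |A| * (4 * Real.sqrt v) := mul_le_mul_of_nonneg_left h1 (abs_nonneg A)
  have h4 := hw v (le_trans (le_max_right _ _) hv)
  nlinarith [h3, h4]

lemma logb_le_eight_sqrt_sqrt {L : ℝ} (hL : 1 ≤ L) :
    Real.logb 2 L ≤ 8 * Real.sqrt (Real.sqrt L) := by
  have h0 : (0:ℝ) ≤ L := by linarith
  have hs1 : 1 ≤ Real.sqrt L := by
    rw [show (1:ℝ) = Real.sqrt 1 by simp]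
    exact Real.sqrt_le_sqrt hL
  have h1 : Real.log (Real.sqrt L) ≤ 2 * Real.sqrt (Real.sqrt L) := log_le_two_sqrt hs1
  have h2 : Real.log L = 2 * Real.log (Real.sqrt L) := by
    rw [Real.log_sqrt h0]; ring
  have hlog2 : (1:ℝ)/2 ≤ Real.log 2 := by
    have := Real.log_two_gt_d9
    linarith
  have hlogv : 0 ≤ Real.log L := Real.log_nonneg hL
  rw [Real.logb, div_le_iff₀ (by linarith : (0:ℝ) < Real.log 2)]
  nlinarith [Real.sqrt_nonneg (Real.sqrt L)]

lemma sqrt_sqrt_sq {L : ℝ} :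
    Real.sqrt (Real.sqrt L) * Real.sqrt (Real.sqrt L) = Real.sqrt L :=
  Real.mul_self_sqrt (Real.sqrt_nonneg L)

/-! ### Parameter estimates -/

lemma natlog_le_logb {L : ℕ} (hL : 1 ≤ L) : (Nat.log 2 L : ℝ) ≤ Real.logb 2 L := by
  have h1 : (2:ℕ)^(Nat.log 2 L) ≤ L := Nat.pow_log_le_self 2 (by omega)
  have h2 : ((2:ℝ))^(Nat.log 2 L) ≤ (L:ℝ) := by exact_mod_cast h1
  have h3 : Real.logb 2 ((2:ℝ)^(Nat.log 2 L)) = (Nat.log 2 L : ℝ) := by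
    rw [Real.logb_pow, Real.logb_self_eq_one (by norm_num)]; ring
  calc (Nat.log 2 L : ℝ) = Real.logb 2 ((2:ℝ)^(Nat.log 2 L)) := h3.symm
    _ ≤ Real.logb 2 L := by
        apply (Real.logb_le_logb (by norm_num) (by positivity) (by exact_mod_cast hL)).mpr h2

lemma logb_le_natlog {L : ℕ} (hL : 1 ≤ L) :
    Real.logb 2 L ≤ (Nat.log 2 L : ℝ) + 1 := by
  have h1 : L < (2:ℕ)^(Nat.log 2 L + 1) := Nat.lt_pow_succ_log_self (by norm_num) L
  have h2 : (L:ℝ) ≤ ((2:ℝ))^(Nat.log 2 L + 1) := by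
    have : (L:ℝ) ≤ (((2:ℕ)^(Nat.log 2 L + 1) : ℕ) : ℝ) := by exact_mod_cast le_of_lt h1
    calc (L:ℝ) ≤ (((2:ℕ)^(Nat.log 2 L + 1) : ℕ) : ℝ) := this
      _ = ((2:ℝ))^(Nat.log 2 L + 1) := by push_cast; ring
  have h3 : Real.logb 2 ((2:ℝ)^(Nat.log 2 L + 1)) = (Nat.log 2 L : ℝ) + 1 := by
    rw [Real.logb_pow, Real.logb_self_eq_one (by norm_num)]; push_cast; ring
  calc Real.logb 2 L ≤ Real.logb 2 ((2:ℝ)^(Nat.log 2 L + 1)) := by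
        apply (Real.logb_le_logb (by norm_num) (by exact_mod_cast hL) (by positivity)).mpr h2
    _ = (Nat.log 2 L : ℝ) + 1 := h3

lemma one_le_logb {L : ℕ} (hL : 2 ≤ L) : 1 ≤ Real.logb 2 L := by
  have h2 : (2:ℝ) ≤ (L:ℝ) := by exact_mod_cast hL
  calc (1:ℝ) = Real.logb 2 2 := (Real.logb_self_eq_one (by norm_num)).symm
    _ ≤ Real.logb 2 L := by
        apply (Real.logb_le_logb (by norm_num) (by norm_num) (by linarith)).mpr h2

lemma logb_add_one_sq_le {L : ℕ} (hL : 2 ≤ L) :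
    (Real.logb 2 L + 1)^2 ≤ 256 * Real.sqrt L := by
  have hL1 : (1:ℝ) ≤ (L:ℝ) := by exact_mod_cast (by omega : 1 ≤ L)
  have h1 : Real.logb 2 L ≤ 8 * Real.sqrt (Real.sqrt L) := logb_le_eight_sqrt_sqrt hL1
  have h2 : (1:ℝ) ≤ Real.logb 2 L := one_le_logb hL
  have h3 : Real.logb 2 L + 1 ≤ 2 * Real.logb 2 L := by linarith
  have h4 : (Real.logb 2 L + 1)^2 ≤ 4 * (Real.logb 2 L)^2 := by nlinarith
  have h5 : (Real.logb 2 L)^2 ≤ 64 * (Real.sqrt (Real.sqrt L) * Real.sqrt (Real.sqrt L)) := by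
    nlinarith [Real.sqrt_nonneg (Real.sqrt L), h1, h2]
  rw [sqrt_sqrt_sq] at h5
  linarith

/-- `covh` is big: `2*eps ≤ covh L`. -/
lemma covh_ge (eps L : ℕ) (hL : 2 ≤ L)
    (P2 : 512*(eps:ℝ)*Real.sqrt L ≤ L) : 2*eps ≤ covh L := by
  have hd : 0 < (Nat.log 2 L + 1)^2 := by positivity
  rw [covh, Nat.le_div_iff_mul_le hd]
  -- real comparison
  have hcast : ((2*eps*(Nat.log 2 L + 1)^2 : ℕ) : ℝ) ≤ (L:ℝ) := by
    push_cast
    have hg : ((Nat.log 2 L : ℝ) + 1) ≤ Real.logb 2 L + 1 := by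
      linarith [natlog_le_logb (by omega : 1 ≤ L)]
    have hg0 : (0:ℝ) ≤ (Nat.log 2 L : ℝ) + 1 := by positivity
    have hsq : ((Nat.log 2 L : ℝ) + 1)^2 ≤ (Real.logb 2 L + 1)^2 := by nlinarith
    have h256 : (Real.logb 2 L + 1)^2 ≤ 256 * Real.sqrt L := logb_add_one_sq_le hL
    have heps0 : (0:ℝ) ≤ 2*(eps:ℝ) := by positivity
    calc 2*(eps:ℝ)*((Nat.log 2 L : ℝ) + 1)^2 ≤ 2*(eps:ℝ)*(256 * Real.sqrt L) := by
          apply mul_le_mul_of_nonneg_left (le_trans hsq h256) heps0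
      _ = 512*(eps:ℝ)*Real.sqrt L := by ring
      _ ≤ L := P2
  exact_mod_cast hcast

lemma covR_le_pow (eps L : ℕ) : covR eps L ≤ L^eps := by
  calc covR eps L = (covh L).choose eps := rfl
    _ ≤ (covh L)^eps := Nat.choose_le_pow _ _
    _ ≤ L^eps := Nat.pow_le_pow_left (Nat.div_le_self _ _) _

lemma natpow_eq_rpow {L : ℕ} (n : ℕ) (hL : 1 ≤ L) :
    ((L:ℝ))^(n:ℕ) = (2:ℝ) ^ ((n:ℝ) * Real.logb 2 L) := by
  have hL0 : (0:ℝ) < L := by exact_mod_cast hL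
  rw [mul_comm, Real.rpow_mul (by norm_num : (0:ℝ) ≤ 2),
    Real.rpow_logb (by norm_num) (by norm_num) hL0, Real.rpow_natCast]

/-- `covR eps L ≤ 2^(L-eps)`. -/
lemma covR_le_two_pow (eps L : ℕ) (hL : 2 ≤ L) (hepsL : eps ≤ L)
    (P3 : 8*(eps:ℝ)*Real.sqrt L + eps ≤ L) : covR eps L ≤ 2^(L-eps) := by
  have h1 : covR eps L ≤ L^eps := covR_le_pow eps L
  have h2 : (L:ℝ)^(eps:ℕ) ≤ (2:ℝ)^((L-eps : ℕ):ℝ) := by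
    rw [natpow_eq_rpow eps (by omega)]
    apply Real.rpow_le_rpow_of_exponent_le (by norm_num)
    have hv8 : Real.logb 2 L ≤ 8 * Real.sqrt L := by
      have hL1 : (1:ℝ) ≤ (L:ℝ) := by exact_mod_cast (by omega : 1 ≤ L)
      have := logb_le_four_sqrt hL1
      have hs := Real.sqrt_nonneg (L:ℝ)
      linarith
    have heps0 : (0:ℝ) ≤ (eps:ℝ) := by positivity
    have h3 : (eps:ℝ) * Real.logb 2 L ≤ (eps:ℝ) * (8 * Real.sqrt L) :=
      mul_le_mul_of_nonneg_left hv8 heps0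
    have h4 : ((L-eps : ℕ):ℝ) = (L:ℝ) - eps := by
      push_cast [Nat.cast_sub hepsL]; ring
    rw [h4]
    linarith [P3]
  have h5 : ((L^eps : ℕ):ℝ) ≤ ((2^(L-eps) : ℕ):ℝ) := by
    push_cast
    rw [← Real.rpow_natCast 2 (L-eps)]
    exact h2
  have h6 : L^eps ≤ 2^(L-eps) := by exact_mod_cast h5
  omega

lemma rpow_collapse {a b : ℝ} : (2:ℝ)^a * (2:ℝ)^b = (2:ℝ)^(a+b) :=
  (Real.rpow_add (by norm_num) a b).symm

lemma M_pos (x : ℝ) (L : ℕ) (hβ : 0 ≤ x) : 1 ≤ ⌈(2:ℝ)^(x*L)⌉₊ :=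
  Nat.one_le_ceil_iff.mpr (Real.rpow_pos_of_pos (by norm_num) _)

lemma M_le_half (L : ℕ) (β : ℝ) (hβ0 : 0 ≤ β) (P1 : 2 ≤ L) (P4 : β*L + 2 ≤ L) :
    ⌈(2:ℝ)^(β*(L:ℝ))⌉₊ ≤ 2^(L-1) := by
  have hpos : (0:ℝ) ≤ (2:ℝ)^(β*(L:ℝ)) := (Real.rpow_pos_of_pos (by norm_num) _).le
  have hceil : (⌈(2:ℝ)^(β*(L:ℝ))⌉₊ : ℝ) < (2:ℝ)^(β*(L:ℝ)) + 1 := Nat.ceil_lt_add_one hpos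
  have h1 : (2:ℝ)^(β*(L:ℝ)) ≤ (2:ℝ)^((L:ℝ)-2) :=
    Real.rpow_le_rpow_of_exponent_le (by norm_num) (by linarith)
  have h2 : (2:ℝ)^((L:ℝ)-2) + 1 ≤ (2:ℝ)^(((L-1:ℕ)):ℝ) := by
    have hc : ((L-1:ℕ):ℝ) = (L:ℝ) - 1 := by
      push_cast [Nat.cast_sub (by omega : 1 ≤ L)]; ring
    rw [hc]
    have h3 : (2:ℝ)^((L:ℝ)-1) = (2:ℝ)^((L:ℝ)-2) * 2 := by
      rw [show (L:ℝ)-1 = ((L:ℝ)-2) + 1 by ring, Real.rpow_add (by norm_num)]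
      norm_num
    have h4 : (1:ℝ) ≤ (2:ℝ)^((L:ℝ)-2) := by
      rw [show (1:ℝ) = (2:ℝ)^(0:ℝ) by simp]
      apply Real.rpow_le_rpow_of_exponent_le (by norm_num)
      have : (2:ℝ) ≤ (L:ℝ) := by exact_mod_cast P1
      linarith
    linarith
  have h5 : (⌈(2:ℝ)^(β*(L:ℝ))⌉₊ : ℝ) < ((2^(L-1) : ℕ) : ℝ) := by
    have hc2 : ((2^(L-1) : ℕ) : ℝ) = (2:ℝ)^(((L-1:ℕ)):ℝ) := by
      push_cast
      rw [Real.rpow_natCast]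
    rw [hc2]
    linarith
  exact_mod_cast le_of_lt h5

lemma covR_cast_le (eps L : ℕ) (hL : 1 ≤ L) :
    ((covR eps L : ℕ) : ℝ) ≤ (2:ℝ)^((eps:ℝ) * Real.logb 2 L) := by
  have h1 : ((covR eps L : ℕ) : ℝ) ≤ ((L^eps : ℕ) : ℝ) := by
    exact_mod_cast covR_le_pow eps L
  calc ((covR eps L : ℕ) : ℝ) ≤ ((L^eps : ℕ) : ℝ) := h1
    _ = ((L:ℝ))^(eps:ℕ) := by push_cast; ring
    _ = (2:ℝ)^((eps:ℝ) * Real.logb 2 L) := natpow_eq_rpow eps hL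

lemma logb_le_eight_sqrt {L : ℕ} (hL : 1 ≤ L) :
    Real.logb 2 (L:ℝ) ≤ 8 * Real.sqrt L := by
  have hL1 : (1:ℝ) ≤ (L:ℝ) := by exact_mod_cast hL
  have := logb_le_four_sqrt hL1
  have hs := Real.sqrt_nonneg (L:ℝ)
  linarith

lemma H2M_holds (eps L : ℕ) (β : ℝ) (hβ0 : 0 ≤ β) (P1 : 2 ≤ L)
    (P5 : 8*(eps:ℝ)*Real.sqrt L + 2 ≤ (1-β)*L) (HRpos : 0 < covR eps L) :
    2*(⌈(2:ℝ)^(β*(L:ℝ))⌉₊:ℝ) ≤ (2:ℝ)^L / (covR eps L) := by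
  have hR0 : (0:ℝ) < (covR eps L : ℝ) := by exact_mod_cast HRpos
  rw [le_div_iff₀ hR0]
  have hMle : (⌈(2:ℝ)^(β*(L:ℝ))⌉₊:ℝ) ≤ 2 * (2:ℝ)^(β*(L:ℝ)) := by
    have hpos : (1:ℝ) ≤ (2:ℝ)^(β*(L:ℝ)) := by
      rw [show (1:ℝ) = (2:ℝ)^(0:ℝ) by simp]
      apply Real.rpow_le_rpow_of_exponent_le (by norm_num)
      positivity
    have hceil : (⌈(2:ℝ)^(β*(L:ℝ))⌉₊ : ℝ) < (2:ℝ)^(β*(L:ℝ)) + 1 :=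
      Nat.ceil_lt_add_one (by linarith)
    linarith
  have hRle : (covR eps L : ℝ) ≤ (2:ℝ)^((eps:ℝ) * Real.logb 2 L) :=
    covR_cast_le eps L (by omega)
  have hprod : 2*(⌈(2:ℝ)^(β*(L:ℝ))⌉₊:ℝ) * (covR eps L : ℝ) ≤
      (2:ℝ)^(β*(L:ℝ) + 2 + (eps:ℝ) * Real.logb 2 L) := by
    have h4 : (4:ℝ) = (2:ℝ)^(2:ℝ) := by
      rw [show ((2:ℝ):ℝ) = ((2:ℕ):ℝ) by norm_num, Real.rpow_natCast]
      norm_num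
    calc 2*(⌈(2:ℝ)^(β*(L:ℝ))⌉₊:ℝ) * (covR eps L : ℝ)
        ≤ 2*(2 * (2:ℝ)^(β*(L:ℝ))) * ((2:ℝ)^((eps:ℝ) * Real.logb 2 L)) := by
          apply mul_le_mul (by linarith [hMle]) hRle hR0.le (by positivity)
      _ = (2:ℝ)^(2:ℝ) * ((2:ℝ)^(β*(L:ℝ)) * (2:ℝ)^((eps:ℝ) * Real.logb 2 L)) := by
          rw [← h4]; ring
      _ = (2:ℝ)^(β*(L:ℝ) + 2 + (eps:ℝ) * Real.logb 2 L) := by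
          rw [rpow_collapse, rpow_collapse]
          ring_nf
  have hexp : β*(L:ℝ) + 2 + (eps:ℝ) * Real.logb 2 L ≤ (L:ℝ) := by
    have hv8 : Real.logb 2 (L:ℝ) ≤ 8 * Real.sqrt L := logb_le_eight_sqrt (by omega)
    have h3 : (eps:ℝ) * Real.logb 2 L ≤ (eps:ℝ) * (8 * Real.sqrt L) :=
      mul_le_mul_of_nonneg_left hv8 (by positivity)
    nlinarith [P5]
  calc 2*(⌈(2:ℝ)^(β*(L:ℝ))⌉₊:ℝ) * (covR eps L : ℝ)
      ≤ (2:ℝ)^(β*(L:ℝ) + 2 + (eps:ℝ) * Real.logb 2 L) := hprod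
    _ ≤ (2:ℝ)^((L:ℝ)) := Real.rpow_le_rpow_of_exponent_le (by norm_num) hexp
    _ = (2:ℝ)^(L:ℕ) := Real.rpow_natCast 2 L

lemma Hlow_holds (eps L : ℕ) (heps : 1 ≤ eps) (P1 : 2 ≤ L)
    (hcovh : 2*eps ≤ covh L) (HRpos : 0 < covR eps L)
    (P6 : 8 ≤ Real.logb 2 L)
    (P7 : 2 + ((eps:ℝ)+1)*Real.logb 2 L ≤ (L:ℝ)/2) :
    2*(2*covh L : ℝ)*(L:ℝ)^(2*covh L) ≤ (2:ℝ)^L / (covR eps L) := by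
  set v : ℝ := Real.logb 2 L with hv
  have hR0 : (0:ℝ) < (covR eps L : ℝ) := by exact_mod_cast HRpos
  have hv1 : (1:ℝ) ≤ v := one_le_logb P1
  have hL0 : (0:ℝ) < (L:ℝ) := by exact_mod_cast (by omega : 0 < L)
  rw [le_div_iff₀ hR0]
  -- bound each factor by a power of 2
  have hcovh2 : (covh L : ℝ) ≤ (2:ℝ)^v := by
    have h1 : (covh L : ℝ) ≤ (L:ℝ) := by
      exact_mod_cast Nat.div_le_self L _
    have h2 : (L:ℝ) = (2:ℝ)^v := by
      rw [hv, Real.rpow_logb (by norm_num) (by norm_num) hL0]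
    linarith
  have hLpow : (L:ℝ)^(2*covh L : ℕ) = (2:ℝ)^(((2*covh L : ℕ):ℝ) * v) :=
    natpow_eq_rpow _ (by omega)
  have hRle : (covR eps L : ℝ) ≤ (2:ℝ)^((eps:ℝ) * v) := covR_cast_le eps L (by omega)
  have h4 : (4:ℝ) = (2:ℝ)^(2:ℝ) := by
    rw [show ((2:ℝ):ℝ) = ((2:ℕ):ℝ) by norm_num, Real.rpow_natCast]
    norm_num
  have hprod : 2*(2*covh L : ℝ)*(L:ℝ)^(2*covh L) * (covR eps L : ℝ) ≤
      (2:ℝ)^(2 + v + ((2*covh L : ℕ):ℝ) * v + (eps:ℝ) * v) := by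
    have hcovh0 : (0:ℝ) ≤ (covh L : ℝ) := by positivity
    calc 2*(2*covh L : ℝ)*(L:ℝ)^(2*covh L) * (covR eps L : ℝ)
        = 4 * (covh L : ℝ) * (L:ℝ)^(2*covh L) * (covR eps L : ℝ) := by ring
      _ ≤ 4 * ((2:ℝ)^v) * ((2:ℝ)^(((2*covh L : ℕ):ℝ) * v)) * ((2:ℝ)^((eps:ℝ) * v)) := by
          rw [hLpow]
          have hp1 : (0:ℝ) ≤ (2:ℝ)^(((2*covh L : ℕ):ℝ) * v) := by positivity
          apply mul_le_mul _ hRle hR0.le (by positivity)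
          apply mul_le_mul _ (le_refl _) hp1 (by positivity)
          apply mul_le_mul_of_nonneg_left hcovh2 (by norm_num)
      _ = (2:ℝ)^(2:ℝ) * ((2:ℝ)^v * ((2:ℝ)^(((2*covh L : ℕ):ℝ) * v) * (2:ℝ)^((eps:ℝ) * v))) := by
          rw [← h4]; ring
      _ = (2:ℝ)^(2 + v + ((2*covh L : ℕ):ℝ) * v + (eps:ℝ) * v) := by
          rw [rpow_collapse, rpow_collapse, rpow_collapse]
          ring_nf
  have hexp : 2 + v + ((2*covh L : ℕ):ℝ) * v + (eps:ℝ) * v ≤ (L:ℝ) := by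
    -- covh·v bound : covh ≤ L / v²
    have hg : v ≤ ((Nat.log 2 L : ℝ) + 1) := logb_le_natlog (by omega)
    have hcovhle : (covh L : ℝ) ≤ (L:ℝ) / (((Nat.log 2 L : ℝ) + 1))^2 := by
      have h1 : ((L / (Nat.log 2 L + 1)^2 : ℕ) : ℝ) ≤ (L:ℝ) / (((Nat.log 2 L + 1)^2 : ℕ):ℝ) :=
        Nat.cast_div_le
      calc (covh L : ℝ) = ((L / (Nat.log 2 L + 1)^2 : ℕ) : ℝ) := rfl
        _ ≤ (L:ℝ) / (((Nat.log 2 L + 1)^2 : ℕ):ℝ) := h1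
        _ = (L:ℝ) / (((Nat.log 2 L : ℝ) + 1))^2 := by push_cast; ring_nf
    have hcovhv : (covh L : ℝ) ≤ (L:ℝ) / v^2 := by
      calc (covh L : ℝ) ≤ (L:ℝ) / (((Nat.log 2 L : ℝ) + 1))^2 := hcovhle
        _ ≤ (L:ℝ) / v^2 := by
            apply div_le_div_of_nonneg_left hL0.le (by positivity)
            nlinarith
    have hterm : ((2*covh L : ℕ):ℝ) * v ≤ 2 * (L:ℝ) / v := by
      have h2 : ((2*covh L : ℕ):ℝ) = 2 * (covh L : ℝ) := by push_cast; ring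
      rw [h2]
      have h3 : 2 * (covh L : ℝ) * v ≤ 2 * ((L:ℝ)/v^2) * v := by
        apply mul_le_mul_of_nonneg_right _ (by linarith)
        linarith
      calc 2 * (covh L : ℝ) * v ≤ 2 * ((L:ℝ)/v^2) * v := h3
        _ = 2 * (L:ℝ) / v := by field_simp
    have hterm2 : 2 * (L:ℝ) / v ≤ (L:ℝ)/4 := by
      rw [div_le_div_iff₀ (by linarith) (by norm_num)]
      nlinarith
    have hsum : 2 + v + (eps:ℝ) * v ≤ (L:ℝ)/2 := by
      have : 2 + ((eps:ℝ)+1)*v = 2 + v + (eps:ℝ)*v := by ring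
      linarith [P7]
    have : (L:ℝ)/2 + (L:ℝ)/4 ≤ (L:ℝ) := by linarith
    linarith
  calc 2*(2*covh L : ℝ)*(L:ℝ)^(2*covh L) * (covR eps L : ℝ)
      ≤ (2:ℝ)^(2 + v + ((2*covh L : ℕ):ℝ) * v + (eps:ℝ) * v) := hprod
    _ ≤ (2:ℝ)^((L:ℝ)) := Real.rpow_le_rpow_of_exponent_le (by norm_num) hexp
    _ = (2:ℝ)^(L:ℕ) := Real.rpow_natCast 2 L

set_option maxHeartbeats 1000000 in
lemma Hfinal_holds (eps L : ℕ) (c : ℝ) (hc0 : 0 ≤ c) (heps : 1 ≤ eps)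
    (P1 : 2 ≤ L) (hepsL : eps ≤ L)
    (hcovh : 2*eps ≤ covh L)
    (P8 : 512*Real.sqrt L ≤ L)
    (P9 : c*Real.logb 2 ((eps:ℝ)+1) + c*eps + c*(eps:ℝ)*Real.logb 2 L
        + Real.logb 2 ((eps:ℝ)+7) + Real.logb 2 (Real.logb 2 L + 1) + 2
        + Real.logb 2 (Nat.factorial eps : ℝ)
        + (eps:ℝ)*(2*Real.logb 2 (Real.logb 2 L) + 4) ≤ (eps:ℝ)*Real.logb 2 L) :
    c * Real.logb 2 (∑ i ∈ Finset.range (eps+1), ((L+eps).choose i : ℝ)) ≤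
      Real.logb 2 (covR eps L) - Real.logb 2 ((covT eps L : ℝ)+4) - 2 := by
  set v : ℝ := Real.logb 2 L with hvdef
  have hv1 : (1:ℝ) ≤ v := one_le_logb P1
  have hL0 : (0:ℝ) < (L:ℝ) := by exact_mod_cast (by omega : 0 < L)
  have hepsh : eps ≤ covh L := by omega
  have hcovRpos : 0 < covR eps L := Nat.choose_pos hepsh
  have hcovR0 : (0:ℝ) < (covR eps L : ℝ) := by exact_mod_cast hcovRpos
  -- (a) upper bound on logb D
  have hDle : Real.logb 2 (∑ i ∈ Finset.range (eps+1), ((L+eps).choose i : ℝ)) ≤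
      Real.logb 2 ((eps:ℝ)+1) + (eps:ℝ)*(1 + v) := by
    have hDnat : ∑ i ∈ Finset.range (eps+1), (L+eps).choose i ≤ (eps+1)*(L+eps)^eps := by
      calc ∑ i ∈ Finset.range (eps+1), (L+eps).choose i
          ≤ ∑ _i ∈ Finset.range (eps+1), (L+eps)^eps := by
            apply Finset.sum_le_sum
            intro i hi
            calc (L+eps).choose i ≤ (L+eps)^i := Nat.choose_le_pow _ _
              _ ≤ (L+eps)^eps := Nat.pow_le_pow_right (by omega)
                  (Nat.lt_succ_iff.mp (Finset.mem_range.mp hi))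
        _ = (eps+1)*(L+eps)^eps := by
            rw [Finset.sum_const, Finset.card_range, smul_eq_mul]
    have hD1 : (1:ℝ) ≤ ∑ i ∈ Finset.range (eps+1), ((L+eps).choose i : ℝ) := by
      have h0 : ((L+eps).choose 0 : ℝ) = 1 := by simp
      have hs := Finset.single_le_sum (f := fun i => ((L+eps).choose i : ℝ))
        (fun i _ => by positivity) (Finset.mem_range.mpr (Nat.succ_pos eps))
      simpa using hs
    have hcast : (∑ i ∈ Finset.range (eps+1), ((L+eps).choose i : ℝ)) =
        ((∑ i ∈ Finset.range (eps+1), (L+eps).choose i : ℕ) : ℝ) := by push_cast; ring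
    have hmono : Real.logb 2 (∑ i ∈ Finset.range (eps+1), ((L+eps).choose i : ℝ)) ≤
        Real.logb 2 (((eps+1)*(L+eps)^eps : ℕ) : ℝ) := by
      apply (Real.logb_le_logb (by norm_num) (by linarith) (by positivity)).mpr
      rw [hcast]
      exact_mod_cast hDnat
    have hsplit : Real.logb 2 (((eps+1)*(L+eps)^eps : ℕ) : ℝ) =
        Real.logb 2 ((eps:ℝ)+1) + (eps:ℝ) * Real.logb 2 ((L:ℝ)+eps) := by
      push_cast
      rw [Real.logb_mul (by positivity) (by positivity), Real.logb_pow]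
    have hLE : Real.logb 2 ((L:ℝ)+eps) ≤ 1 + v := by
      have h2L : ((L:ℝ)+eps) ≤ 2*(L:ℝ) := by
        have : (eps:ℝ) ≤ (L:ℝ) := by exact_mod_cast hepsL
        linarith
      have h3 : Real.logb 2 ((L:ℝ)+eps) ≤ Real.logb 2 (2*(L:ℝ)) := by
        apply (Real.logb_le_logb (by norm_num) (by positivity) (by positivity)).mpr h2L
      have h4 : Real.logb 2 (2*(L:ℝ)) = 1 + v := by
        rw [Real.logb_mul (by norm_num) hL0.ne', Real.logb_self_eq_one (by norm_num)]
      linarith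
    have h5 : (eps:ℝ) * Real.logb 2 ((L:ℝ)+eps) ≤ (eps:ℝ)*(1+v) :=
      mul_le_mul_of_nonneg_left hLE (by positivity)
    calc Real.logb 2 (∑ i ∈ Finset.range (eps+1), ((L+eps).choose i : ℝ))
        ≤ Real.logb 2 (((eps+1)*(L+eps)^eps : ℕ) : ℝ) := hmono
      _ = Real.logb 2 ((eps:ℝ)+1) + (eps:ℝ) * Real.logb 2 ((L:ℝ)+eps) := hsplit
      _ ≤ Real.logb 2 ((eps:ℝ)+1) + (eps:ℝ)*(1+v) := by linarith
  -- (b) lower bound on logb covR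
  have hRlow : (eps:ℝ)*(v - 2*Real.logb 2 v - 4) - Real.logb 2 (Nat.factorial eps : ℝ) ≤
      Real.logb 2 (covR eps L) := by
    have hb1 : 0 < covh L + 1 - eps := by omega
    have hb1R : (0:ℝ) < ((covh L + 1 - eps : ℕ) : ℝ) := by exact_mod_cast hb1
    have hfac : (0:ℝ) < (Nat.factorial eps : ℝ) := by exact_mod_cast Nat.factorial_pos eps
    have hp : (((covh L + 1 - eps : ℕ)) : ℝ)^eps / (Nat.factorial eps : ℝ) ≤
        (covR eps L : ℝ) := Nat.pow_le_choose (α := ℝ) eps (covh L)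
    have hlogb1 : (eps:ℝ) * Real.logb 2 (((covh L + 1 - eps : ℕ)) : ℝ)
        - Real.logb 2 (Nat.factorial eps : ℝ) ≤ Real.logb 2 (covR eps L) := by
      have h1 : Real.logb 2 ((((covh L + 1 - eps : ℕ)) : ℝ)^eps / (Nat.factorial eps : ℝ)) ≤
          Real.logb 2 (covR eps L) := by
        apply (Real.logb_le_logb (by norm_num) (by positivity) hcovR0).mpr hp
      rw [Real.logb_div (by positivity) hfac.ne', Real.logb_pow] at h1
      exact h1
    -- lower bound the base
    have hhalf : (covh L : ℝ)/2 ≤ (((covh L + 1 - eps : ℕ)) : ℝ) := by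
      have : covh L ≤ 2*(covh L + 1 - eps) := by omega
      have hc : (covh L : ℝ) ≤ 2*(((covh L + 1 - eps : ℕ)) : ℝ) := by exact_mod_cast this
      linarith
    -- covh lower bound : L/(2(g+1)^2) ≤ covh
    have hgsq : ((Nat.log 2 L : ℝ) + 1)^2 ≤ (L:ℝ)/2 := by
      have h1 : ((Nat.log 2 L : ℝ) + 1) ≤ v + 1 := by
        linarith [natlog_le_logb (by omega : 1 ≤ L)]
      have h2 : (v+1)^2 ≤ 256*Real.sqrt L := logb_add_one_sq_le P1
      have h3 : ((Nat.log 2 L : ℝ) + 1)^2 ≤ (v+1)^2 := by nlinarith [natlog_le_logb (by omega : 1 ≤ L), hv1]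
      nlinarith [P8]
    have hgpos : (0:ℝ) < ((Nat.log 2 L : ℝ) + 1)^2 := by positivity
    have hcovhlow : (L:ℝ)/(2*((Nat.log 2 L : ℝ) + 1)^2) ≤ (covh L : ℝ) := by
      -- covh = L / (g+1)^2 (nat div) ≥ L/(g+1)^2 - 1 ≥ L/(2(g+1)^2) since L/(g+1)^2 ≥ 2
      have hdm := Nat.div_add_mod L ((Nat.log 2 L + 1)^2)
      have hmod : L % ((Nat.log 2 L + 1)^2) < (Nat.log 2 L + 1)^2 :=
        Nat.mod_lt _ (by positivity)
      have heq : ((L:ℝ)) = (((Nat.log 2 L + 1)^2 : ℕ):ℝ) * (covh L : ℝ) +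
          ((L % ((Nat.log 2 L + 1)^2) : ℕ) : ℝ) := by
        exact_mod_cast hdm.symm
      have hcastsq : (((Nat.log 2 L + 1)^2 : ℕ):ℝ) = ((Nat.log 2 L : ℝ) + 1)^2 := by
        push_cast; ring
      have hmodR : ((L % ((Nat.log 2 L + 1)^2) : ℕ) : ℝ) ≤ ((Nat.log 2 L : ℝ) + 1)^2 := by
        rw [← hcastsq]
        exact_mod_cast le_of_lt hmod
      -- so covh ≥ (L - (g+1)^2)/(g+1)^2 = L/(g+1)^2 - 1
      rw [hcastsq] at heq
      have h6 : (L:ℝ)/((Nat.log 2 L : ℝ) + 1)^2 - 1 ≤ (covh L : ℝ) := by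
        have hring : ((Nat.log 2 L : ℝ) + 1)^2 * ((covh L : ℝ) + 1) =
            ((Nat.log 2 L : ℝ) + 1)^2 * (covh L : ℝ) + ((Nat.log 2 L : ℝ) + 1)^2 := by ring
        have h6' : (L:ℝ)/((Nat.log 2 L : ℝ) + 1)^2 ≤ (covh L : ℝ) + 1 := by
          rw [div_le_iff₀ hgpos]
          rw [mul_comm]
          linarith [heq, hmodR, hring]
        linarith
      have h7 : (2:ℝ) ≤ (L:ℝ)/((Nat.log 2 L : ℝ) + 1)^2 := by
        rw [le_div_iff₀ hgpos]
        linarith [hgsq]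
      have h8 : (L:ℝ)/(2*((Nat.log 2 L : ℝ) + 1)^2) = ((L:ℝ)/((Nat.log 2 L : ℝ) + 1)^2)/2 := by
        rw [div_div, mul_comm]
      rw [h8]
      linarith
  -- combine into logb bound on the base
    have hbase : (L:ℝ)/(4*((Nat.log 2 L : ℝ) + 1)^2) ≤ (((covh L + 1 - eps : ℕ)) : ℝ) := by
      have : (L:ℝ)/(4*((Nat.log 2 L : ℝ) + 1)^2) = ((L:ℝ)/(2*((Nat.log 2 L : ℝ) + 1)^2))/2 := by
        rw [div_div]
        congr 1
        ring
      rw [this]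
      linarith [hcovhlow, hhalf]
    have hbasepos : (0:ℝ) < (L:ℝ)/(4*((Nat.log 2 L : ℝ) + 1)^2) := by positivity
    have hlogbase : Real.logb 2 ((L:ℝ)/(4*((Nat.log 2 L : ℝ) + 1)^2)) ≤
        Real.logb 2 (((covh L + 1 - eps : ℕ)) : ℝ) := by
      apply (Real.logb_le_logb (by norm_num) hbasepos hb1R).mpr hbase
    have hlogsplit : Real.logb 2 ((L:ℝ)/(4*((Nat.log 2 L : ℝ) + 1)^2)) =
        v - Real.logb 2 4 - 2 * Real.logb 2 ((Nat.log 2 L : ℝ) + 1) := by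
      rw [Real.logb_div hL0.ne' (by positivity), Real.logb_mul (by norm_num) (by positivity)]
      have : Real.logb 2 (((Nat.log 2 L : ℝ) + 1)^2) =
          2 * Real.logb 2 ((Nat.log 2 L : ℝ) + 1) := by
        rw [show ((Nat.log 2 L : ℝ) + 1)^2 = ((Nat.log 2 L : ℝ) + 1)^(2:ℕ) by norm_num,
          Real.logb_pow]
        norm_num
      rw [this]
      ring
    have hlog4 : Real.logb 2 (4:ℝ) = 2 := by
      rw [show (4:ℝ) = (2:ℝ)^(2:ℕ) by norm_num, Real.logb_pow,
        Real.logb_self_eq_one (by norm_num)]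
      norm_num
    have hlogg : Real.logb 2 ((Nat.log 2 L : ℝ) + 1) ≤ 1 + Real.logb 2 v := by
      have h1 : ((Nat.log 2 L : ℝ) + 1) ≤ 2*v := by
        linarith [natlog_le_logb (by omega : 1 ≤ L)]
      have h2 : Real.logb 2 ((Nat.log 2 L : ℝ) + 1) ≤ Real.logb 2 (2*v) := by
        apply (Real.logb_le_logb (by norm_num) (by positivity) (by linarith)).mpr h1
      have h3 : Real.logb 2 (2*v) = 1 + Real.logb 2 v := by
        rw [Real.logb_mul (by norm_num) (by linarith : v ≠ 0)]
        rw [Real.logb_self_eq_one (by norm_num)]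
      linarith
    have hfinal1 : v - 2 - 2*(1 + Real.logb 2 v) ≤
        Real.logb 2 (((covh L + 1 - eps : ℕ)) : ℝ) := by
      rw [hlogsplit, hlog4] at hlogbase
      nlinarith [hlogg, hlogbase]
    have h9 : (eps:ℝ)*(v - 2*Real.logb 2 v - 4) ≤
        (eps:ℝ) * Real.logb 2 (((covh L + 1 - eps : ℕ)) : ℝ) := by
      apply mul_le_mul_of_nonneg_left _ (Nat.cast_nonneg eps)
      linarith [hfinal1]
    linarith [hlogb1, h9]
  -- (c) upper bound on logb (T+4)
  have hTle : Real.logb 2 ((covT eps L : ℝ)+4) ≤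
      Real.logb 2 ((eps:ℝ)+7) + Real.logb 2 (v+1) := by
    have hcovR1 : 1 ≤ covR eps L := hcovRpos
    have harg1 : 1 ≤ covR eps L * L^2 := Nat.mul_pos hcovRpos (pow_pos (by omega) 2)
    have hT1 : (Nat.log 2 (covR eps L * L^2) : ℝ) ≤
        Real.logb 2 ((covR eps L * L^2 : ℕ) : ℝ) := natlog_le_logb harg1
    have hT2 : Real.logb 2 ((covR eps L * L^2 : ℕ) : ℝ) =
        Real.logb 2 (covR eps L) + 2*v := by
      push_cast
      rw [Real.logb_mul hcovR0.ne' (by positivity), Real.logb_pow]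
      push_cast
      ring
    have hT3 : Real.logb 2 (covR eps L) ≤ (eps:ℝ)*v := by
      have h1 : (covR eps L : ℝ) ≤ (2:ℝ)^((eps:ℝ)*v) := covR_cast_le eps L (by omega)
      have h2 : Real.logb 2 ((2:ℝ)^((eps:ℝ)*v)) = (eps:ℝ)*v :=
        Real.logb_rpow (by norm_num) (by norm_num)
      calc Real.logb 2 (covR eps L) ≤ Real.logb 2 ((2:ℝ)^((eps:ℝ)*v)) := by
            apply (Real.logb_le_logb (by norm_num) hcovR0 (by positivity)).mpr h1
        _ = (eps:ℝ)*v := h2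
    have hT4 : (covT eps L : ℝ) ≤ (eps:ℝ)*v + 2*v + 1 := by
      have : (covT eps L : ℝ) = (Nat.log 2 (covR eps L * L^2) : ℝ) + 1 := by
        rw [covT]; push_cast; ring
      rw [this]
      rw [hT2] at hT1
      linarith
    have hT5 : (covT eps L : ℝ) + 4 ≤ ((eps:ℝ)+7)*(v+1) := by
      nlinarith [hT4, hv1]
    have hT6 : Real.logb 2 ((covT eps L : ℝ)+4) ≤ Real.logb 2 (((eps:ℝ)+7)*(v+1)) := by
      apply (Real.logb_le_logb (by norm_num) (by positivity) (by positivity)).mpr hT5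
    have hT7 : Real.logb 2 (((eps:ℝ)+7)*(v+1)) =
        Real.logb 2 ((eps:ℝ)+7) + Real.logb 2 (v+1) := by
      rw [Real.logb_mul (by positivity) (by positivity)]
    linarith
  -- (e) final combination
  have hcD : c * Real.logb 2 (∑ i ∈ Finset.range (eps+1), ((L+eps).choose i : ℝ)) ≤
      c * (Real.logb 2 ((eps:ℝ)+1) + (eps:ℝ)*(1 + v)) :=
    mul_le_mul_of_nonneg_left hDle hc0
  have hexpand : (eps:ℝ)*(v - 2*Real.logb 2 v - 4) =
      (eps:ℝ)*v - (eps:ℝ)*(2*Real.logb 2 v + 4) := by ring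
  nlinarith [hcD, hRlow, hTle, P9, hexpand]

open Filter in
lemma ev_sqrt (b k γ : ℝ) (hγ : 0 < γ) :
    ∀ᶠ L : ℕ in atTop, b*Real.sqrt L + k ≤ γ*L := by
  obtain ⟨v₀, h⟩ := sqrt_helper γ b k hγ
  filter_upwards [(tendsto_natCast_atTop_atTop (R := ℝ)).eventually_ge_atTop v₀] with L hL
  exact h L hL

open Filter in
lemma ev_logb_tendsto :
    Tendsto (fun L : ℕ => Real.logb 2 (L:ℝ)) atTop atTop :=
  (Real.tendsto_logb_atTop (by norm_num)).comp (tendsto_natCast_atTop_atTop (R := ℝ))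

open Filter in
lemma ev_logb_lin (A B γ : ℝ) (hγ : 0 < γ) :
    ∀ᶠ L : ℕ in atTop, A*Real.logb 2 (L:ℝ) + B ≤ γ*L := by
  obtain ⟨v₀, h⟩ := logb_lin γ A B hγ
  filter_upwards [(tendsto_natCast_atTop_atTop (R := ℝ)).eventually_ge_atTop v₀] with L hL
  exact h L hL

open Filter in
lemma P9_eventually (eps : ℕ) (c : ℝ) (heps : 1 ≤ eps) (hc0 : 0 ≤ c) (hc1 : c < 1) :
    ∀ᶠ L : ℕ in atTop,
      c*Real.logb 2 ((eps:ℝ)+1) + c*eps + c*(eps:ℝ)*Real.logb 2 L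
        + Real.logb 2 ((eps:ℝ)+7) + Real.logb 2 (Real.logb 2 L + 1) + 2
        + Real.logb 2 (Nat.factorial eps : ℝ)
        + (eps:ℝ)*(2*Real.logb 2 (Real.logb 2 L) + 4) ≤ (eps:ℝ)*Real.logb 2 L := by
  have hγ : (0:ℝ) < (1-c)*(eps:ℝ) := by
    have : (1:ℝ) ≤ (eps:ℝ) := by exact_mod_cast heps
    nlinarith
  obtain ⟨v₀, hv₀⟩ := logb_lin ((1-c)*(eps:ℝ)) (2*(eps:ℝ)+1)
    (c*Real.logb 2 ((eps:ℝ)+1) + c*eps + Real.logb 2 ((eps:ℝ)+7) + 3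
      + Real.logb 2 (Nat.factorial eps : ℝ) + 4*eps) hγ
  filter_upwards [ev_logb_tendsto.eventually_ge_atTop (max 1 v₀)] with L hL
  set v : ℝ := Real.logb 2 (L:ℝ) with hv
  have hv1 : (1:ℝ) ≤ v := le_trans (le_max_left _ _) hL
  have hmain := hv₀ v (le_trans (le_max_right _ _) hL)
  have hlogv1 : Real.logb 2 (v+1) ≤ 1 + Real.logb 2 v := by
    have h1 : v + 1 ≤ 2*v := by linarith
    have h2 : Real.logb 2 (v+1) ≤ Real.logb 2 (2*v) := by
      apply (Real.logb_le_logb (by norm_num) (by linarith) (by linarith)).mpr h1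
    have h3 : Real.logb 2 (2*v) = 1 + Real.logb 2 v := by
      rw [Real.logb_mul (by norm_num) (by linarith : v ≠ 0),
        Real.logb_self_eq_one (by norm_num)]
    linarith
  have hring : ((1-c)*(eps:ℝ))*v = (eps:ℝ)*v - c*((eps:ℝ)*v) := by ring
  have hring2 : c*(eps:ℝ)*v = c*((eps:ℝ)*v) := by ring
  have hring3 : (2*(eps:ℝ)+1)*Real.logb 2 v = 2*(eps:ℝ)*Real.logb 2 v + Real.logb 2 v := by
    ring
  have hexpand : (eps:ℝ)*(2*Real.logb 2 v + 4) = 2*(eps:ℝ)*Real.logb 2 v + 4*(eps:ℝ) := by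
    ring
  linarith [hmain, hlogv1, hring, hring2, hring3, hexpand]

open Filter in
theorem stmt_18' (ε : ℕ) (hε : 1 ≤ ε) (β c : ℝ)
    (hβ0 : 0 < β) (hβ1 : β < 1) (hc0 : 0 ≤ c) (hc1 : c < 1) :
    ∃ L₀ : ℕ, ∀ L : ℕ, L₀ ≤ L →
      ∀ C : Finset (Finset (List Bool)),
        (∀ S ∈ C, S.card = ⌈(2 : ℝ) ^ (β * L)⌉₊ ∧ ∀ x ∈ S, x.length = L) →
        isLevCode 0 (⌈(2 : ℝ) ^ (β * L)⌉₊) ε ↑C →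
        C.Nonempty →
        c * ⌈(2 : ℝ) ^ (β * L)⌉₊ *
            (Real.logb 2 (∑ i ∈ Finset.range (ε + 1), ((L + ε).choose i : ℝ)) - ε) ≤
          Real.logb 2 ((2 ^ L).choose ⌈(2 : ℝ) ^ (β * L)⌉₊) -
            Real.logb 2 C.card := by
  have h1β : (0:ℝ) < 1 - β := by linarith
  obtain ⟨L₀, hL₀⟩ := eventually_atTop.mp <|
    (((eventually_ge_atTop 2).and (eventually_ge_atTop ε)).and
      (((ev_sqrt (512*(ε:ℝ)) 0 1 (by norm_num)).and
          (ev_sqrt (8*(ε:ℝ)) (ε:ℝ) 1 (by norm_num))).and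
       ((ev_sqrt 0 2 (1-β) h1β).and (ev_sqrt (8*(ε:ℝ)) 2 (1-β) h1β)))).and
      (((ev_logb_tendsto.eventually_ge_atTop 8).and
        (ev_logb_lin ((ε:ℝ)+1) 2 (1/2) (by norm_num))).and
       ((ev_sqrt 512 0 1 (by norm_num)).and
        (P9_eventually ε c hε hc0 hc1)))
  refine ⟨L₀, ?_⟩
  intro L hLL C hC hcode hne
  obtain ⟨⟨⟨P1, hepsL⟩, ⟨P2, P3⟩, P4, P5⟩, ⟨P6, P7⟩, P8, P9⟩ := hL₀ L hLL
  have P2' : 512*(ε:ℝ)*Real.sqrt L ≤ L := by linarith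
  have P3' : 8*(ε:ℝ)*Real.sqrt L + ε ≤ L := by linarith
  have P4' : β*(L:ℝ) + 2 ≤ L := by nlinarith [P4]
  have P7' : 2 + ((ε:ℝ)+1)*Real.logb 2 L ≤ (L:ℝ)/2 := by linarith
  have P8' : 512*Real.sqrt L ≤ L := by linarith
  set M : ℕ := ⌈(2 : ℝ) ^ (β * (L:ℝ))⌉₊ with hMdef
  have hM : 1 ≤ M := M_pos β L hβ0.le
  have HMhalf : M ≤ 2^(L-1) := M_le_half L β hβ0.le P1 P4'
  have hcovh : 2*ε ≤ covh L := covh_ge ε L P1 P2'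
  have HRpos : 0 < covR ε L := Nat.choose_pos (by omega)
  have HRU : covR ε L ≤ 2^(L-ε) := covR_le_two_pow ε L P1 hepsL P3'
  have Hlow := Hlow_holds ε L hε P1 hcovh HRpos P6 P7'
  have H2M := H2M_holds ε L β hβ0.le P1 P5 HRpos
  have Hfinal := Hfinal_holds ε L c hc0 hε P1 hepsL hcovh P8' P9
  exact main_estimate ε L M c hc0 hepsL (by omega) hM HMhalf HRpos HRU Hlow H2M Hfinal
    C hC hcode hne

/-- Asymptotic lower bound on the redundancy of `(0,M,ε)_L` error-correcting codes:
for `M = ⌈2^{βL}⌉` and any `0 ≤ c < 1`, for all sufficiently large `L` the redundancy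
is at least `c·M·(log₂(Σ_{i=0}^{ε} binom(L+ε,i)) − ε)`. -/
theorem stmt_18 (ε : ℕ) (hε : 1 ≤ ε) (β c : ℝ)
    (hβ0 : 0 < β) (hβ1 : β < 1) (hc0 : 0 ≤ c) (hc1 : c < 1) :
    ∃ L₀ : ℕ, ∀ L : ℕ, L₀ ≤ L →
      ∀ C : Finset (Finset (List Bool)),
        (∀ S ∈ C, S.card = ⌈(2 : ℝ) ^ (β * L)⌉₊ ∧ ∀ x ∈ S, x.length = L) →
        isLevCode 0 (⌈(2 : ℝ) ^ (β * L)⌉₊) ε ↑C →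
        C.Nonempty →
        c * ⌈(2 : ℝ) ^ (β * L)⌉₊ *
            (Real.logb 2 (∑ i ∈ Finset.range (ε + 1), ((L + ε).choose i : ℝ)) - ε) ≤
          Real.logb 2 ((2 ^ L).choose ⌈(2 : ℝ) ^ (β * L)⌉₊) -
            Real.logb 2 C.card :=
  stmt_18' ε hε β c hβ0 hβ1 hc0 hc1
end
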